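/- arXiv:2312.02651 — 5 statements merged into one kernel-verified Lean document; each statement's English description precedes it below -/
import Mathlib

section
/- For the matrices A, B, C, E, F over F_64 one has [E,A] = B·C, [E,B] = 1, [E,C] = 1, [F,A] = A^2, [F,B] = B^2, [F,C] = 1 and [F,E] = E^2, where [X,Y] = X^{-1}Y^{-1}XY. -/
open Matrix

/-- [E,A] = B·C, [E,B] = 1, [E,C] = 1, [F,A] = A², [F,B] = B²,
[F,C] = 1 and [F,E] = E², where [X,Y] = X⁻¹Y⁻¹XY. -/
theorem stmt_6 (F : Type*) [Field F] [Fintype F] (hF : Fintype.card F = 64)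
    (ζ : Fˣ) (hζ : ∀ x : Fˣ, x ∈ Subgroup.zpowers ζ)
    (β α : F) (hβ : β = (ζ : F) ^ 7) (hα : α = β ^ 3)
    (A B C E Fm : Matrix (Fin 3) (Fin 3) F)
    (hA : A = !![0,0,1; 1,0,0; 0,1,0])
    (hB : B = !![1,0,0; 0,α,0; 0,0,α⁻¹])
    (hC : C = !![β,0,0; 0,β^4,0; 0,0,β^4])
    (hE : E = !![1,0,0; 0,β,0; 0,0,β⁻¹])
    (hFm : Fm = !![1,0,0; 0,0,1; 0,1,0]) :
    E⁻¹ * A⁻¹ * E * A = B * C ∧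
    E⁻¹ * B⁻¹ * E * B = 1 ∧
    E⁻¹ * C⁻¹ * E * C = 1 ∧
    Fm⁻¹ * A⁻¹ * Fm * A = A ^ 2 ∧
    Fm⁻¹ * B⁻¹ * Fm * B = B ^ 2 ∧
    Fm⁻¹ * C⁻¹ * Fm * C = 1 ∧
    Fm⁻¹ * E⁻¹ * Fm * E = E ^ 2 := by
  classical
  have hζ63 : ζ ^ 63 = 1 := by
    have hcard : Fintype.card Fˣ = 63 := by
      rw [Fintype.card_units, hF]
    rw [← hcard]
    exact pow_card_eq_one
  have h9 : β ^ 9 = 1 := by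
    rw [hβ, ← pow_mul]
    have : ((ζ ^ 63 : Fˣ) : F) = 1 := by rw [hζ63]; rfl
    simpa using this
  have h10 : β ^ 10 = β := by
    rw [show (10:ℕ) = 9 + 1 from rfl, pow_add, h9, one_mul, pow_one]
  have h16 : β ^ 16 = β ^ 7 := by
    rw [show (16:ℕ) = 9 + 7 from rfl, pow_add, h9, one_mul]
  have h18 : β ^ 18 = 1 := by
    rw [show (18:ℕ) = 9 * 2 from rfl, pow_mul, h9, one_pow]
  have hβinv : β⁻¹ = β ^ 8 := by
    apply inv_eq_of_mul_eq_one_right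
    rw [← pow_succ']; exact h9
  have hαinv : α⁻¹ = β ^ 6 := by
    apply inv_eq_of_mul_eq_one_right
    rw [hα, ← pow_add]; exact h9
  rw [hαinv] at hB
  rw [hβinv] at hE
  rw [hα] at hB
  have hAinv : A⁻¹ = !![0,1,0; 0,0,1; 1,0,0] := by
    apply Matrix.inv_eq_right_inv
    norm_num [hA, Matrix.mul_fin_three]
    rw [Matrix.one_fin_three]
  have hBinv : B⁻¹ = !![1,0,0; 0,β^6,0; 0,0,β^3] := by
    apply Matrix.inv_eq_right_inv
    norm_num [hB, Matrix.mul_fin_three, ← pow_add, h9]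
    rw [Matrix.one_fin_three]
  have hCinv : C⁻¹ = !![β^8,0,0; 0,β^5,0; 0,0,β^5] := by
    apply Matrix.inv_eq_right_inv
    norm_num [hC, Matrix.mul_fin_three, ← pow_succ, ← pow_succ', ← pow_add, h9]
    rw [Matrix.one_fin_three]
  have hEinv : E⁻¹ = !![1,0,0; 0,β^8,0; 0,0,β] := by
    apply Matrix.inv_eq_right_inv
    norm_num [hE, Matrix.mul_fin_three, ← pow_succ, ← pow_succ', h9]
    rw [Matrix.one_fin_three]
  have hFminv : Fm⁻¹ = Fm := by
    apply Matrix.inv_eq_right_inv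
    norm_num [hFm, Matrix.mul_fin_three]
    rw [Matrix.one_fin_three]
  refine ⟨?_, ?_, ?_, ?_, ?_, ?_, ?_⟩
  · rw [hEinv, hAinv]
    norm_num [hA, hB, hC, hE, Matrix.mul_fin_three, ← pow_succ, ← pow_succ',
      ← pow_add, h9, h10, h16, h18]
  · rw [hEinv, hBinv]
    norm_num [hB, hE, Matrix.mul_fin_three, ← pow_succ, ← pow_succ',
      ← pow_add, h9, h10, h16, h18]
    rw [Matrix.one_fin_three]
  · rw [hEinv, hCinv]
    norm_num [hC, hE, Matrix.mul_fin_three, ← pow_succ, ← pow_succ',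
      ← pow_add, h9, h10, h16, h18]
    rw [Matrix.one_fin_three]
  · rw [hFminv, hAinv, pow_two]
    norm_num [hA, hFm, Matrix.mul_fin_three]
  · rw [hFminv, hBinv, pow_two]
    norm_num [hB, hFm, Matrix.mul_fin_three, ← pow_succ, ← pow_succ',
      ← pow_add, h9, h10, h16, h18]
  · rw [hFminv, hCinv]
    norm_num [hC, hFm, Matrix.mul_fin_three, ← pow_succ, ← pow_succ',
      ← pow_add, h9, h10, h16, h18]
    rw [Matrix.one_fin_three]
  · rw [hFminv, hEinv, pow_two]
    norm_num [hE, hFm, Matrix.mul_fin_three, ← pow_succ, ← pow_succ',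
      ← pow_add, h9, h10, h16, h18]
end

section
/- In PSU_3(8), let Q_1 = ⟨Ā, B̄⟩ be generated by the images of A = [[0,0,1],[1,0,0],[0,1,0]] and B = diag(1,α,α^{-1}). Then Q_1 is an elementary abelian group of order 9. -/
open Matrix

/-- The set of matrices in GL₃(F) of determinant 1 preserving the Hermitian
form (x,y) = Σᵢ xᵢ·yᵢ⁸.  This set is closed under the group operations, so the
subgroup it generates is exactly SU₃(8) when `F` is the field with 64
elements. -/
def SU3 (F : Type*) [Field F] : Subgroup (GL (Fin 3) F) :=
  Subgroup.closure {M : GL (Fin 3) F |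
    (M : Matrix (Fin 3) (Fin 3) F).det = 1 ∧
    ∀ x y : Fin 3 → F,
      (∑ i, (M : Matrix (Fin 3) (Fin 3) F).mulVec x i *
        ((M : Matrix (Fin 3) (Fin 3) F).mulVec y i) ^ 8) = ∑ i, x i * (y i) ^ 8}

/-- PSU₃ : the quotient of SU₃ by its center. -/
def PSU3 (F : Type*) [Field F] : Type _ :=
  ↥(SU3 F) ⧸ Subgroup.center ↥(SU3 F)

instance (F : Type*) [Field F] : Group (PSU3 F) :=
  inferInstanceAs (Group (↥(SU3 F) ⧸ Subgroup.center ↥(SU3 F)))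

/-- The projection SU₃(F) → PSU₃(F). -/
def psuProj (F : Type*) [Field F] : ↥(SU3 F) →* PSU3 F :=
  QuotientGroup.mk' (Subgroup.center ↥(SU3 F))

set_option maxHeartbeats 1000000 in
/-- in PSU₃(8), Q₁ = ⟨Ā, B̄⟩ is elementary abelian of order 9. -/
theorem stmt_8 (F : Type*) [Field F] [Fintype F] (hF : Fintype.card F = 64)
    (ζ : Fˣ) (hζ : ∀ x : Fˣ, x ∈ Subgroup.zpowers ζ)
    (α : F) (hα : α = (ζ : F) ^ 21)
    (A B : ↥(SU3 F))
    (hA : ((A : GL (Fin 3) F) : Matrix (Fin 3) (Fin 3) F) = !![0,0,1; 1,0,0; 0,1,0])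
    (hB : ((B : GL (Fin 3) F) : Matrix (Fin 3) (Fin 3) F) = !![1,0,0; 0,α,0; 0,0,α⁻¹]) :
    ∀ Q₁ : Subgroup (PSU3 F),
      Q₁ = Subgroup.closure {psuProj F A, psuProj F B} →
      Nat.card Q₁ = 9 ∧ (∀ g ∈ Q₁, g ^ 3 = 1) ∧
        ∀ g ∈ Q₁, ∀ h ∈ Q₁, g * h = h * g := by
  classical
  intro Q₁ hQ
  -- field facts
  have hcard : Fintype.card Fˣ = 63 := by rw [Fintype.card_units, hF]
  have hord : orderOf ζ = 63 := by
    rw [orderOf_eq_card_of_forall_mem_zpowers hζ, Nat.card_eq_fintype_card, hcard]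
  have hζ63 : ζ ^ 63 = 1 := by rw [← hord]; exact pow_orderOf_eq_one ζ
  have hζ63' : (ζ : F) ^ 63 = 1 := by
    have := congrArg Units.val hζ63
    rwa [Units.val_pow_eq_pow_val, Units.val_one] at this
  have hα3 : α ^ 3 = 1 := by rw [hα, ← pow_mul]; norm_num; exact hζ63'
  have hα1 : α ≠ 1 := by
    intro h
    have h21 : ζ ^ 21 = 1 := Units.ext
      (by rw [Units.val_pow_eq_pow_val, ← hα, h, Units.val_one])
    have := orderOf_dvd_of_pow_eq_one h21
    rw [hord] at this; omega
  have hα0 : α ≠ 0 := by rw [hα]; exact pow_ne_zero _ (Units.ne_zero ζ)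
  have hαinv : α⁻¹ = α ^ 2 :=
    inv_eq_of_mul_eq_one_right (by rw [show α * α ^ 2 = α ^ 3 by ring]; exact hα3)
  have hα2 : α ^ 2 ≠ 1 := by
    intro h
    have h3 := hα3
    rw [pow_succ, h, one_mul] at h3
    exact hα1 h3
  have hαα2 : α ≠ α ^ 2 := by
    intro h
    have h' : α * α = α * 1 := by rw [mul_one, ← pow_two]; exact h.symm
    exact hα1 (mul_left_cancel₀ hα0 h')
  have hB' : ((B : GL (Fin 3) F) : Matrix (Fin 3) (Fin 3) F) = !![1,0,0; 0,α,0; 0,0,α^2] := by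
    rw [hB, hαinv]
  set a := psuProj F A with ha_def
  set b := psuProj F B with hb_def
  -- the commutator [A,B]⁻¹-ish element is central
  set D : ↥(SU3 F) := (A * B)⁻¹ * (B * A) with hD_def
  have hABD : (A * B) * D = B * A := by rw [hD_def]; group
  have hsm : (α • (1 : Matrix (Fin 3) (Fin 3) F)) = !![α,0,0; 0,α,0; 0,0,α] := by
    ext i j
    fin_cases i <;> fin_cases j <;> simp [Matrix.one_apply, Matrix.vecHead, Matrix.vecTail]
  have hmatD : (((D : ↥(SU3 F)) : GL (Fin 3) F) : Matrix (Fin 3) (Fin 3) F)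
      = !![α,0,0; 0,α,0; 0,0,α] := by
    have h1 := congrArg
      (fun x : ↥(SU3 F) => ((x : GL (Fin 3) F) : Matrix (Fin 3) (Fin 3) F)) hABD
    simp only [MulMemClass.coe_mul, Units.val_mul] at h1
    have h2 : (((A : GL (Fin 3) F) : Matrix (Fin 3) (Fin 3) F) *
        ((B : GL (Fin 3) F) : Matrix (Fin 3) (Fin 3) F)) * !![α,0,0; 0,α,0; 0,0,α]
        = ((B : GL (Fin 3) F) : Matrix (Fin 3) (Fin 3) F) *
          ((A : GL (Fin 3) F) : Matrix (Fin 3) (Fin 3) F) := by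
      rw [hA, hB']
      ext i j
      fin_cases i <;> fin_cases j <;>
        simp [Matrix.mul_apply, Fin.sum_univ_three, Matrix.vecHead, Matrix.vecTail] <;>
        first | rfl | linear_combination hα3 | linear_combination α * hα3 | ring
    have hu : IsUnit (((A : GL (Fin 3) F) : Matrix (Fin 3) (Fin 3) F) *
        ((B : GL (Fin 3) F) : Matrix (Fin 3) (Fin 3) F)) := by
      rw [← Units.val_mul]; exact Units.isUnit _
    exact hu.mul_left_cancel (h1.trans h2.symm)
  have hDcentral : D ∈ Subgroup.center ↥(SU3 F) := by
    rw [Subgroup.mem_center_iff]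
    intro g
    apply Subtype.ext
    apply Units.ext
    show ((g : GL (Fin 3) F) : Matrix (Fin 3) (Fin 3) F) *
        ((D : GL (Fin 3) F) : Matrix (Fin 3) (Fin 3) F) =
      ((D : GL (Fin 3) F) : Matrix (Fin 3) (Fin 3) F) *
        ((g : GL (Fin 3) F) : Matrix (Fin 3) (Fin 3) F)
    rw [hmatD, ← hsm, mul_smul_comm, smul_mul_assoc, mul_one, one_mul]
  have hab : a * b = b * a := by
    rw [ha_def, hb_def, ← _root_.map_mul, ← _root_.map_mul]
    exact (QuotientGroup.mk'_eq_mk' _).mpr ⟨D, hDcentral, hABD⟩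
  have hCab : Commute a b := hab
  -- orders of A and B
  have hA3 : A ^ 3 = 1 := by
    apply Subtype.ext
    apply Units.ext
    have : ((((A ^ 3 : ↥(SU3 F))) : GL (Fin 3) F) : Matrix (Fin 3) (Fin 3) F) =
        (((A : GL (Fin 3) F) : Matrix (Fin 3) (Fin 3) F)) ^ 3 := by
      simp [SubmonoidClass.coe_pow, Units.val_pow_eq_pow_val]
    rw [show ((((1 : ↥(SU3 F))) : GL (Fin 3) F) : Matrix (Fin 3) (Fin 3) F) =
        (1 : Matrix (Fin 3) (Fin 3) F) by simp]
    rw [this, hA]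
    ext i j
    fin_cases i <;> fin_cases j <;>
      simp [pow_succ, Matrix.mul_apply, Fin.sum_univ_three, Matrix.one_apply,
        Matrix.vecHead, Matrix.vecTail]
  have hB3 : B ^ 3 = 1 := by
    apply Subtype.ext
    apply Units.ext
    have : ((((B ^ 3 : ↥(SU3 F))) : GL (Fin 3) F) : Matrix (Fin 3) (Fin 3) F) =
        (((B : GL (Fin 3) F) : Matrix (Fin 3) (Fin 3) F)) ^ 3 := by
      simp [SubmonoidClass.coe_pow, Units.val_pow_eq_pow_val]
    rw [show ((((1 : ↥(SU3 F))) : GL (Fin 3) F) : Matrix (Fin 3) (Fin 3) F) =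
        (1 : Matrix (Fin 3) (Fin 3) F) by simp]
    rw [this, hB']
    ext i j
    fin_cases i <;> fin_cases j <;>
      simp [pow_succ, Matrix.mul_apply, Fin.sum_univ_three, Matrix.one_apply,
        Matrix.vecHead, Matrix.vecTail] <;>
      first | rfl | linear_combination hα3 | linear_combination (α ^ 3 + 1) * hα3 | ring
  have ha3 : a ^ 3 = 1 := by rw [ha_def, ← _root_.map_pow, hA3, _root_.map_one]
  have hb3 : b ^ 3 = 1 := by rw [hb_def, ← _root_.map_pow, hB3, _root_.map_one]
  -- kernel elements commute with everything
  have hker : ∀ C : ↥(SU3 F), psuProj F C = 1 → ∀ W : ↥(SU3 F), W * C = C * W := by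
    intro C hC W
    exact Subgroup.mem_center_iff.mp ((QuotientGroup.eq_one_iff C).mp hC) W
  -- the eight nontrivial products are not in the kernel
  have entry : ∀ (W C : ↥(SU3 F)), W * C = C * W → ∀ r c : Fin 3,
      (((W : GL (Fin 3) F) : Matrix (Fin 3) (Fin 3) F) *
        ((C : GL (Fin 3) F) : Matrix (Fin 3) (Fin 3) F)) r c =
      (((C : GL (Fin 3) F) : Matrix (Fin 3) (Fin 3) F) *
        ((W : GL (Fin 3) F) : Matrix (Fin 3) (Fin 3) F)) r c := by
    intro W C hw r c
    have hmt := congrArg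
      (fun x : ↥(SU3 F) => ((x : GL (Fin 3) F) : Matrix (Fin 3) (Fin 3) F)) hw
    simp only [MulMemClass.coe_mul, Units.val_mul] at hmt
    exact congrFun (congrFun hmt r) c
  have key : ∀ i j : ℕ, i < 3 → j < 3 → psuProj F (A ^ i * B ^ j) = 1 → i = 0 ∧ j = 0 := by
    intro i j hi hj h
    interval_cases i <;> interval_cases j
    · exact ⟨rfl, rfl⟩
    · exfalso
      have he := entry _ _ (hker _ h A) 1 0
      simp [hA, hB', pow_succ, Matrix.mul_apply, Fin.sum_univ_three,
        Matrix.vecHead, Matrix.vecTail] at he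
      first
      | exact hα1 he | exact hα1 he.symm
      | exact hα2 (by linear_combination he) | exact hα2 (by linear_combination -he)
      | exact hαα2 (by linear_combination he) | exact hαα2 (by linear_combination -he)
      | exact hαα2 (by linear_combination he - α * hα3)
      | exact hαα2 (by linear_combination -he - α * hα3)
      | exact hαα2 (by linear_combination he + α * hα3)
      | exact hαα2 (by linear_combination -he + α * hα3)
      | exact hα2 (by linear_combination he - α * hα3)
      | exact hα2 (by linear_combination -he - α * hα3)
      | exact hα2 (by linear_combination he + α * hα3)
      | exact hα2 (by linear_combination -he + α * hα3)
      | exact hα1 (by linear_combination he - α * hα3)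
      | exact hα1 (by linear_combination -he - α * hα3)
      | exact hα1 (by linear_combination he + α * hα3)
      | exact hα1 (by linear_combination -he + α * hα3)
    · exfalso
      have he := entry _ _ (hker _ h A) 1 0
      simp [hA, hB', pow_succ, Matrix.mul_apply, Fin.sum_univ_three,
        Matrix.vecHead, Matrix.vecTail] at he
      first
      | exact hα1 he | exact hα1 he.symm
      | exact hα2 (by linear_combination he) | exact hα2 (by linear_combination -he)
      | exact hαα2 (by linear_combination he) | exact hαα2 (by linear_combination -he)
      | exact hαα2 (by linear_combination he - α * hα3)
      | exact hαα2 (by linear_combination -he - α * hα3)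
      | exact hαα2 (by linear_combination he + α * hα3)
      | exact hαα2 (by linear_combination -he + α * hα3)
      | exact hα2 (by linear_combination he - α * hα3)
      | exact hα2 (by linear_combination -he - α * hα3)
      | exact hα2 (by linear_combination he + α * hα3)
      | exact hα2 (by linear_combination -he + α * hα3)
      | exact hα1 (by linear_combination he - α * hα3)
      | exact hα1 (by linear_combination -he - α * hα3)
      | exact hα1 (by linear_combination he + α * hα3)
      | exact hα1 (by linear_combination -he + α * hα3)
    · exfalso
      have he := entry _ _ (hker _ h B) 0 2
      simp [hA, hB', pow_succ, Matrix.mul_apply, Fin.sum_univ_three,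
        Matrix.vecHead, Matrix.vecTail] at he
      first
      | exact hα1 he | exact hα1 he.symm
      | exact hα2 (by linear_combination he) | exact hα2 (by linear_combination -he)
      | exact hαα2 (by linear_combination he) | exact hαα2 (by linear_combination -he)
      | exact hαα2 (by linear_combination he - α * hα3)
      | exact hαα2 (by linear_combination -he - α * hα3)
      | exact hαα2 (by linear_combination he + α * hα3)
      | exact hαα2 (by linear_combination -he + α * hα3)
      | exact hα2 (by linear_combination he - α * hα3)
      | exact hα2 (by linear_combination -he - α * hα3)
      | exact hα2 (by linear_combination he + α * hα3)
      | exact hα2 (by linear_combination -he + α * hα3)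
      | exact hα1 (by linear_combination he - α * hα3)
      | exact hα1 (by linear_combination -he - α * hα3)
      | exact hα1 (by linear_combination he + α * hα3)
      | exact hα1 (by linear_combination -he + α * hα3)
    · exfalso
      have he := entry _ _ (hker _ h A) 0 1
      simp [hA, hB', pow_succ, Matrix.mul_apply, Fin.sum_univ_three,
        Matrix.vecHead, Matrix.vecTail] at he
      first
      | exact hα1 he | exact hα1 he.symm
      | exact hα2 (by linear_combination he) | exact hα2 (by linear_combination -he)
      | exact hαα2 (by linear_combination he) | exact hαα2 (by linear_combination -he)
      | exact hαα2 (by linear_combination he - α * hα3)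
      | exact hαα2 (by linear_combination -he - α * hα3)
      | exact hαα2 (by linear_combination he + α * hα3)
      | exact hαα2 (by linear_combination -he + α * hα3)
      | exact hα2 (by linear_combination he - α * hα3)
      | exact hα2 (by linear_combination -he - α * hα3)
      | exact hα2 (by linear_combination he + α * hα3)
      | exact hα2 (by linear_combination -he + α * hα3)
      | exact hα1 (by linear_combination he - α * hα3)
      | exact hα1 (by linear_combination -he - α * hα3)
      | exact hα1 (by linear_combination he + α * hα3)
      | exact hα1 (by linear_combination -he + α * hα3)
    · exfalso
      have he := entry _ _ (hker _ h A) 0 1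
      simp [hA, hB', pow_succ, Matrix.mul_apply, Fin.sum_univ_three,
        Matrix.vecHead, Matrix.vecTail] at he
      first
      | exact hα1 he | exact hα1 he.symm
      | exact hα2 (by linear_combination he) | exact hα2 (by linear_combination -he)
      | exact hαα2 (by linear_combination he) | exact hαα2 (by linear_combination -he)
      | exact hαα2 (by linear_combination he - α * hα3)
      | exact hαα2 (by linear_combination -he - α * hα3)
      | exact hαα2 (by linear_combination he + α * hα3)
      | exact hαα2 (by linear_combination -he + α * hα3)
      | exact hα2 (by linear_combination he - α * hα3)
      | exact hα2 (by linear_combination -he - α * hα3)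
      | exact hα2 (by linear_combination he + α * hα3)
      | exact hα2 (by linear_combination -he + α * hα3)
      | exact hα1 (by linear_combination he - α * hα3)
      | exact hα1 (by linear_combination -he - α * hα3)
      | exact hα1 (by linear_combination he + α * hα3)
      | exact hα1 (by linear_combination -he + α * hα3)
    · exfalso
      have he := entry _ _ (hker _ h B) 0 1
      simp [hA, hB', pow_succ, Matrix.mul_apply, Fin.sum_univ_three,
        Matrix.vecHead, Matrix.vecTail] at he
      first
      | exact hα1 he | exact hα1 he.symm
      | exact hα2 (by linear_combination he) | exact hα2 (by linear_combination -he)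
      | exact hαα2 (by linear_combination he) | exact hαα2 (by linear_combination -he)
      | exact hαα2 (by linear_combination he - α * hα3)
      | exact hαα2 (by linear_combination -he - α * hα3)
      | exact hαα2 (by linear_combination he + α * hα3)
      | exact hαα2 (by linear_combination -he + α * hα3)
      | exact hα2 (by linear_combination he - α * hα3)
      | exact hα2 (by linear_combination -he - α * hα3)
      | exact hα2 (by linear_combination he + α * hα3)
      | exact hα2 (by linear_combination -he + α * hα3)
      | exact hα1 (by linear_combination he - α * hα3)
      | exact hα1 (by linear_combination -he - α * hα3)
      | exact hα1 (by linear_combination he + α * hα3)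
      | exact hα1 (by linear_combination -he + α * hα3)
    · exfalso
      have he := entry _ _ (hker _ h A) 0 0
      simp [hA, hB', pow_succ, Matrix.mul_apply, Fin.sum_univ_three,
        Matrix.vecHead, Matrix.vecTail] at he
      first
      | exact hα1 he | exact hα1 he.symm
      | exact hα2 (by linear_combination he) | exact hα2 (by linear_combination -he)
      | exact hαα2 (by linear_combination he) | exact hαα2 (by linear_combination -he)
      | exact hαα2 (by linear_combination he - α * hα3)
      | exact hαα2 (by linear_combination -he - α * hα3)
      | exact hαα2 (by linear_combination he + α * hα3)
      | exact hαα2 (by linear_combination -he + α * hα3)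
      | exact hα2 (by linear_combination he - α * hα3)
      | exact hα2 (by linear_combination -he - α * hα3)
      | exact hα2 (by linear_combination he + α * hα3)
      | exact hα2 (by linear_combination -he + α * hα3)
      | exact hα1 (by linear_combination he - α * hα3)
      | exact hα1 (by linear_combination -he - α * hα3)
      | exact hα1 (by linear_combination he + α * hα3)
      | exact hα1 (by linear_combination -he + α * hα3)
    · exfalso
      have he := entry _ _ (hker _ h A) 0 0
      simp [hA, hB', pow_succ, Matrix.mul_apply, Fin.sum_univ_three,
        Matrix.vecHead, Matrix.vecTail] at he
      first
      | exact hα1 he | exact hα1 he.symm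
      | exact hα2 (by linear_combination he) | exact hα2 (by linear_combination -he)
      | exact hαα2 (by linear_combination he) | exact hαα2 (by linear_combination -he)
      | exact hαα2 (by linear_combination he - α * hα3)
      | exact hαα2 (by linear_combination -he - α * hα3)
      | exact hαα2 (by linear_combination he + α * hα3)
      | exact hαα2 (by linear_combination -he + α * hα3)
      | exact hα2 (by linear_combination he - α * hα3)
      | exact hα2 (by linear_combination -he - α * hα3)
      | exact hα2 (by linear_combination he + α * hα3)
      | exact hα2 (by linear_combination -he + α * hα3)
      | exact hα1 (by linear_combination he - α * hα3)
      | exact hα1 (by linear_combination -he - α * hα3)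
      | exact hα1 (by linear_combination he + α * hα3)
      | exact hα1 (by linear_combination -he + α * hα3)
  have hnt : ∀ i j : ZMod 3, a ^ i.val * b ^ j.val = 1 → i = 0 ∧ j = 0 := by
    intro i j hij
    have hij' : psuProj F (A ^ i.val * B ^ j.val) = 1 := by
      rw [_root_.map_mul, _root_.map_pow, _root_.map_pow, ← ha_def, ← hb_def]; exact hij
    obtain ⟨h1, h2⟩ := key i.val j.val (ZMod.val_lt i) (ZMod.val_lt j) hij'
    exact ⟨(ZMod.val_eq_zero i).mp h1, (ZMod.val_eq_zero j).mp h2⟩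
  -- the homomorphism from (ZMod 3)²
  have hmul : ∀ x y : Multiplicative (ZMod 3 × ZMod 3),
      (fun p : Multiplicative (ZMod 3 × ZMod 3) =>
        a ^ (Multiplicative.toAdd p).1.val * b ^ (Multiplicative.toAdd p).2.val) (x * y) =
      (fun p : Multiplicative (ZMod 3 × ZMod 3) =>
        a ^ (Multiplicative.toAdd p).1.val * b ^ (Multiplicative.toAdd p).2.val) x *
      (fun p : Multiplicative (ZMod 3 × ZMod 3) =>
        a ^ (Multiplicative.toAdd p).1.val * b ^ (Multiplicative.toAdd p).2.val) y := by
    intro x y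
    simp only [toAdd_mul, Prod.fst_add, Prod.snd_add]
    rw [ZMod.val_add, ZMod.val_add, ← pow_eq_pow_mod _ ha3, ← pow_eq_pow_mod _ hb3,
      pow_add, pow_add,
      (hCab.symm.pow_pow (Multiplicative.toAdd x).2.val (Multiplicative.toAdd y).1.val).mul_mul_mul_comm]
  set φ : Multiplicative (ZMod 3 × ZMod 3) →* PSU3 F :=
    MonoidHom.mk' (fun p => a ^ (Multiplicative.toAdd p).1.val * b ^ (Multiplicative.toAdd p).2.val)
      hmul with hφdef
  have hφinj : Function.Injective φ := by
    rw [injective_iff_map_eq_one]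
    intro x hx
    have h2 := hnt (Multiplicative.toAdd x).1 (Multiplicative.toAdd x).2 hx
    have h3 : Multiplicative.toAdd x = 0 := Prod.ext h2.1 h2.2
    exact Multiplicative.toAdd.injective (by rw [h3, toAdd_one])
  have hrange : Subgroup.closure {a, b} = φ.range := by
    apply le_antisymm
    · rw [Subgroup.closure_le]
      intro x hx
      rcases hx with rfl | rfl
      · exact ⟨Multiplicative.ofAdd ((1 : ZMod 3), (0 : ZMod 3)), by
          show a ^ (1 : ZMod 3).val * b ^ (0 : ZMod 3).val = _
          norm_num [show (1 : ZMod 3).val = 1 from rfl]⟩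
      · exact ⟨Multiplicative.ofAdd ((0 : ZMod 3), (1 : ZMod 3)), by
          show a ^ (0 : ZMod 3).val * b ^ (1 : ZMod 3).val = _
          norm_num [show (1 : ZMod 3).val = 1 from rfl]⟩
    · rintro x ⟨p, rfl⟩
      have hmem : a ^ (Multiplicative.toAdd p).1.val * b ^ (Multiplicative.toAdd p).2.val ∈
          Subgroup.closure ({a, b} : Set (PSU3 F)) :=
        mul_mem (pow_mem (Subgroup.subset_closure (by simp)) _)
          (pow_mem (Subgroup.subset_closure (by simp)) _)
      exact hmem
  rw [hQ, hrange]
  refine ⟨?_, ?_, ?_⟩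
  · have e : Multiplicative (ZMod 3 × ZMod 3) ≃ ↥(φ.range) :=
      Equiv.ofBijective (fun p => ⟨φ p, p, rfl⟩)
        ⟨fun x y hxy => hφinj (congrArg Subtype.val hxy),
         fun x => by obtain ⟨x, p, hp⟩ := x; exact ⟨p, Subtype.ext hp⟩⟩
    rw [← Nat.card_congr e]
    simp [Nat.card_eq_fintype_card]
  · rintro g ⟨p, rfl⟩
    rw [← _root_.map_pow]
    have hp3 : p ^ 3 = 1 := Multiplicative.toAdd.injective (by
      rw [toAdd_pow, toAdd_one]
      exact show (3 : ℕ) • Multiplicative.toAdd p = 0 by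
        revert p; decide)
    rw [hp3, _root_.map_one]
  · rintro g ⟨p, rfl⟩ h ⟨q, rfl⟩
    rw [← _root_.map_mul, ← _root_.map_mul, mul_comm]
end

section
/- In PSU_3(8), with Q_1 = ⟨Ā, B̄⟩ and Q_* = ⟨B̄, C̄⟩ (images of A, B, C as above), both Q_1 and Q_* are abelian of order 9, [Q_1, Q_*] = ⟨B̄⟩, and Q_2 = ⟨Ā, B̄, C̄⟩ equals Q_1 · Q_*. -/
open Matrix Pointwise

set_option maxHeartbeats 1000000

section GroupAux
open Subgroup Pointwise
open scoped commutatorElement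


variable {G : Type*} [Group G]

lemma pow_val_add_aux {x : G} (hx : x ^ 3 = 1) (u w : ZMod 3) :
    x ^ (u + w).val = x ^ u.val * x ^ w.val := by
  rw [← pow_add, ZMod.val_add, ← pow_eq_pow_mod _ hx]

lemma pow_val_neg_aux {x : G} (hx : x ^ 3 = 1) (u : ZMod 3) :
    x ^ (-u).val = (x ^ u.val)⁻¹ := by
  apply eq_inv_of_mul_eq_one_right
  rw [← pow_val_add_aux hx, add_neg_cancel]
  simp

lemma closure_two_carrier {x y : G} (hx : x ^ 3 = 1) (hy : y ^ 3 = 1) (hxy : Commute x y) :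
    (Subgroup.closure {x, y} : Set G) =
      Set.range (fun p : ZMod 3 × ZMod 3 => x ^ p.1.val * y ^ p.2.val) := by
  apply le_antisymm
  · intro g hg
    induction hg using Subgroup.closure_induction with
    | mem z hz =>
      rcases hz with rfl | rfl
      · exact ⟨(1, 0), by simp [ZMod.val_one]⟩
      · exact ⟨(0, 1), by simp [ZMod.val_one]⟩
    | one => exact ⟨(0, 0), by simp⟩
    | mul g h _ _ hg hh =>
      obtain ⟨⟨u1, v1⟩, rfl⟩ := hg
      obtain ⟨⟨u2, v2⟩, rfl⟩ := hh
      refine ⟨(u1 + u2, v1 + v2), ?_⟩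
      simp only
      rw [pow_val_add_aux hx, pow_val_add_aux hy]
      have hc : y ^ v1.val * x ^ u2.val = x ^ u2.val * y ^ v1.val :=
        (hxy.symm.pow_pow _ _).eq
      calc x ^ u1.val * x ^ u2.val * (y ^ v1.val * y ^ v2.val)
          = x ^ u1.val * (x ^ u2.val * y ^ v1.val) * y ^ v2.val := by group
        _ = x ^ u1.val * (y ^ v1.val * x ^ u2.val) * y ^ v2.val := by rw [hc]
        _ = x ^ u1.val * y ^ v1.val * (x ^ u2.val * y ^ v2.val) := by group
    | inv g _ hg =>
      obtain ⟨⟨u, v⟩, rfl⟩ := hg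
      refine ⟨(-u, -v), ?_⟩
      simp only
      rw [pow_val_neg_aux hx, pow_val_neg_aux hy,
        ((hxy.pow_pow u.val v.val).inv_inv).eq, _root_.mul_inv_rev]
  · rintro g ⟨⟨u, v⟩, rfl⟩
    exact mul_mem (pow_mem (Subgroup.subset_closure (by simp)) _)
      (pow_mem (Subgroup.subset_closure (by simp)) _)

lemma inj_aux {x y : G} (hx : x ^ 3 = 1) (hy : y ^ 3 = 1) (hxy : Commute x y)
    (hfree : ∀ u v : ZMod 3, x ^ u.val * y ^ v.val = 1 → u = 0 ∧ v = 0) :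
    Function.Injective (fun p : ZMod 3 × ZMod 3 => x ^ p.1.val * y ^ p.2.val) := by
  rintro ⟨u1, v1⟩ ⟨u2, v2⟩ h
  simp only at h
  have key : x ^ (u1 - u2).val * y ^ (v1 - v2).val = 1 := by
    have hc : y ^ v1.val * x ^ (-u2).val = x ^ (-u2).val * y ^ v1.val :=
      (hxy.symm.pow_pow _ _).eq
    rw [sub_eq_add_neg, sub_eq_add_neg, add_comm u1,
      pow_val_add_aux hx, pow_val_add_aux hy]
    calc x ^ (-u2).val * x ^ u1.val * (y ^ v1.val * y ^ (-v2).val)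
        = x ^ (-u2).val * (x ^ u1.val * y ^ v1.val) * y ^ (-v2).val := by group
      _ = x ^ (-u2).val * (x ^ u2.val * y ^ v2.val) * y ^ (-v2).val := by rw [h]
      _ = (x ^ (-u2).val * x ^ u2.val) * (y ^ v2.val * y ^ (-v2).val) := by group
      _ = 1 := by
          rw [pow_val_neg_aux hx, pow_val_neg_aux hy, inv_mul_cancel, mul_inv_cancel, one_mul]
  obtain ⟨h1, h2⟩ := hfree _ _ key
  have : u1 = u2 := by rwa [sub_eq_zero] at h1
  have : v1 = v2 := by rwa [sub_eq_zero] at h2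
  aesop

lemma card_closure_two {x y : G} (hx : x ^ 3 = 1) (hy : y ^ 3 = 1) (hxy : Commute x y)
    (hfree : ∀ u v : ZMod 3, x ^ u.val * y ^ v.val = 1 → u = 0 ∧ v = 0) :
    Nat.card (Subgroup.closure {x, y}) = 9 := by
  have hcar := closure_two_carrier hx hy hxy
  have : Nat.card (Subgroup.closure {x, y}) =
      Nat.card (Set.range (fun p : ZMod 3 × ZMod 3 => x ^ p.1.val * y ^ p.2.val)) :=
    Nat.card_congr (Equiv.setCongr hcar)
  rw [this, Nat.card_range_of_injective (inj_aux hx hy hxy hfree), Nat.card_prod, Nat.card_zmod]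

lemma abelian_closure_two {x y : G} (hxy : Commute x y) :
    ∀ g ∈ Subgroup.closure {x, y}, ∀ h ∈ Subgroup.closure {x, y}, g * h = h * g := by
  intro g hg h hh
  refine Subgroup.closure_induction₂ (p := fun a b _ _ => a * b = b * a)
    ?_ ?_ ?_ ?_ ?_ ?_ ?_ hg hh
  · rintro a b (rfl | rfl) (rfl | rfl)
    exacts [rfl, hxy.eq, hxy.symm.eq, rfl]
  · simp
  · simp
  · intro a b c _ _ _ h1 h2
    exact ((Commute.mul_left h1 h2 : Commute (a * b) c)).eq
  · intro a b c _ _ _ h1 h2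
    exact ((Commute.mul_right h1 h2 : Commute c (a * b))).eq
  · intro a b _ _ h1
    exact (Commute.inv_left h1).eq
  · intro a b _ _ h1
    exact (Commute.inv_right h1).eq



lemma swap_aux {z w : G} (h : Commute z w) (t : G) : z * (w * t) = w * (z * t) := by
  rw [← mul_assoc, h.eq, mul_assoc]

lemma comm_mul_aux {x y z w : G} (hzx : Commute z x) (hzy : Commute z y)
    (hzw : Commute z w) (hwx : Commute w x) (hwy : Commute w y) :
    ⁅x * z, w * y⁆ = ⁅x, y⁆ := by
  simp only [commutatorElement_def, _root_.mul_inv_rev, mul_assoc]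
  rw [swap_aux hzw, swap_aux hzy, mul_inv_cancel_left, swap_aux hwy,
    swap_aux hwx.inv_right, swap_aux hwy.inv_right, mul_inv_cancel, mul_one]

section rel
variable {a b c : G}

lemma claim1 (hbc : b * c = c * b) (hac : a * c = c * a * b) : ∀ l : ℕ, a * c ^ l = c ^ l * a * b ^ l := by
  intro l
  induction l with
  | zero => simp
  | succ l ih =>
    have hblc : b ^ l * c = c * b ^ l := ((show Commute b c from hbc).pow_left l).eq
    calc a * c ^ (l + 1) = (a * c ^ l) * c := by rw [pow_succ, mul_assoc]
      _ = c ^ l * a * (b ^ l * c) := by rw [ih]; group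
      _ = c ^ l * a * (c * b ^ l) := by rw [hblc]
      _ = c ^ l * (a * c) * b ^ l := by group
      _ = c ^ l * (c * a * b) * b ^ l := by rw [hac]
      _ = c ^ (l + 1) * a * b ^ (l + 1) := by rw [pow_succ, pow_succ]; group

lemma claim2 (hab : a * b = b * a) (hbc : b * c = c * b) (hac : a * c = c * a * b) : ∀ i l : ℕ, a ^ i * c ^ l = c ^ l * a ^ i * b ^ (i * l) := by
  intro i l
  induction i with
  | zero => simp
  | succ i ih =>
    have hbla : b ^ (i * l) * a = a * b ^ (i * l) :=
      ((show Commute b a from hab.symm).pow_left _).eq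
    calc a ^ (i + 1) * c ^ l = a ^ i * (a * c ^ l) := by rw [pow_succ]; group
      _ = a ^ i * (c ^ l * a * b ^ l) := by rw [claim1 hbc hac]
      _ = (a ^ i * c ^ l) * a * b ^ l := by group
      _ = c ^ l * a ^ i * (b ^ (i * l) * a) * b ^ l := by rw [ih]; group
      _ = c ^ l * a ^ i * (a * b ^ (i * l)) * b ^ l := by rw [hbla]
      _ = c ^ l * a ^ (i + 1) * (b ^ (i * l) * b ^ l) := by rw [pow_succ]; group
      _ = c ^ l * a ^ (i + 1) * b ^ ((i + 1) * l) := by rw [← pow_add, Nat.succ_mul]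

lemma comm_pow (hab : a * b = b * a) (hbc : b * c = c * b) (hac : a * c = c * a * b) (i l : ℕ) : ⁅a ^ i, c ^ l⁆ = b ^ (i * l) := by
  have hba : Commute (b ^ (i * l)) ((a ^ i)⁻¹) :=
    (((show Commute b a from hab.symm).pow_pow _ _).inv_right)
  have hcb : Commute (c ^ l) (b ^ (i * l)) :=
    ((show Commute c b from hbc.symm).pow_pow _ _)
  calc ⁅a ^ i, c ^ l⁆ = a ^ i * c ^ l * (a ^ i)⁻¹ * (c ^ l)⁻¹ := commutatorElement_def _ _
    _ = c ^ l * a ^ i * b ^ (i * l) * (a ^ i)⁻¹ * (c ^ l)⁻¹ := by rw [claim2 hab hbc hac]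
    _ = c ^ l * b ^ (i * l) * (c ^ l)⁻¹ := by
        rw [mul_assoc (c ^ l * a ^ i), hba.eq]; group
    _ = b ^ (i * l) := by rw [hcb.eq]; group

end rel
lemma main_abstract (a b c : G) (ha : a ^ 3 = 1) (hb : b ^ 3 = 1) (hc : c ^ 3 = 1)
    (hab : a * b = b * a) (hbc : b * c = c * b) (hac : a * c = c * a * b)
    (hf1 : ∀ u v : ZMod 3, a ^ u.val * b ^ v.val = 1 → u = 0 ∧ v = 0)
    (hf2 : ∀ u v : ZMod 3, b ^ u.val * c ^ v.val = 1 → u = 0 ∧ v = 0) :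
    (Nat.card (closure {a, b}) = 9 ∧
      ∀ g ∈ closure {a, b}, ∀ h ∈ closure {a, b}, g * h = h * g) ∧
    (Nat.card (closure {b, c}) = 9 ∧
      ∀ g ∈ closure {b, c}, ∀ h ∈ closure {b, c}, g * h = h * g) ∧
    ⁅(closure {a, b} : Subgroup G), closure {b, c}⁆ = closure {b} ∧
    ((closure {a, b, c} : Subgroup G) : Set G) =
      ((closure {a, b} : Subgroup G) : Set G) * ((closure {b, c} : Subgroup G) : Set G) := by
  have hcab : Commute a b := hab
  have hcbc : Commute b c := hbc
  have hcomm : ⁅(closure {a, b} : Subgroup G), closure {b, c}⁆ = closure {b} := by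
    apply le_antisymm
    · rw [Subgroup.commutator_le]
      intro g hg h hh
      have hg' : g ∈ (closure {a, b} : Set G) := hg
      have hh' : h ∈ (closure {b, c} : Set G) := hh
      rw [closure_two_carrier ha hb hcab] at hg'
      rw [closure_two_carrier hb hc hcbc] at hh'
      obtain ⟨⟨u, v⟩, rfl⟩ := hg'
      obtain ⟨⟨k, l⟩, rfl⟩ := hh'
      simp only
      rw [comm_mul_aux (hcab.symm.pow_pow _ _) (hcbc.pow_pow _ _)
        ((Commute.refl b).pow_pow _ _) (hcab.symm.pow_pow _ _) (hcbc.pow_pow _ _),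
        comm_pow hab hbc hac]
      exact pow_mem (subset_closure (Set.mem_singleton b)) _
    · rw [Subgroup.closure_le, Set.singleton_subset_iff]
      have hb2 : ⁅a⁻¹, c⁻¹⁆ = b := by
        rw [commutatorElement_def, inv_inv, inv_inv,
          show a⁻¹ * c⁻¹ * a * c = a⁻¹ * c⁻¹ * (a * c) from by group, hac]
        group
      exact hb2 ▸ commutator_mem_commutator
        (inv_mem (subset_closure (by simp))) (inv_mem (subset_closure (by simp)))
  refine ⟨⟨card_closure_two ha hb hcab hf1, abelian_closure_two hcab⟩,
    ⟨card_closure_two hb hc hcbc hf2, abelian_closure_two hcbc⟩, hcomm, ?_⟩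
  have hQ1Q2 : closure {a, b} ≤ closure {a, b, c} :=
    closure_mono (by intro x hx; simp at hx ⊢; tauto)
  have hQsQ2 : closure {b, c} ≤ closure {a, b, c} :=
    closure_mono (by intro x hx; simp at hx ⊢; tauto)
  have hcommle : ⁅(closure {a, b} : Subgroup G), closure {b, c}⁆ ≤ closure {b, c} := by
    rw [hcomm, Subgroup.closure_le, Set.singleton_subset_iff]
    exact subset_closure (by simp)
  have hswap : ∀ s ∈ closure {a, b}, ∀ t ∈ closure {b, c}, ∃ u ∈ closure {b, c},
      t * s = s * u := by
    intro s hs t ht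
    refine ⟨⁅s⁻¹, t⁆ * t,
      mul_mem (hcommle (commutator_mem_commutator (inv_mem hs) ht)) ht, ?_⟩
    rw [commutatorElement_def]
    group
  apply Set.Subset.antisymm
  · intro g hg
    have hg' : g ∈ closure {a, b, c} := hg
    clear hg
    induction hg' using Subgroup.closure_induction with
    | mem x hx =>
      rcases hx with rfl | rfl | rfl
      · exact ⟨x, subset_closure (by simp), 1, one_mem _, mul_one x⟩
      · exact ⟨x, subset_closure (by simp), 1, one_mem _, mul_one x⟩
      · exact ⟨1, one_mem _, x, subset_closure (by simp), one_mul x⟩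
    | one => exact ⟨1, one_mem _, 1, one_mem _, mul_one 1⟩
    | mul g h _ _ ihg ihh =>
      obtain ⟨s1, hs1, t1, ht1, rfl⟩ := ihg
      obtain ⟨s2, hs2, t2, ht2, rfl⟩ := ihh
      obtain ⟨u, hu, he⟩ := hswap s2 hs2 t1 ht1
      refine ⟨s1 * s2, mul_mem hs1 hs2, u * t2, mul_mem hu ht2, ?_⟩
      calc s1 * s2 * (u * t2) = s1 * (s2 * u) * t2 := by group
        _ = s1 * (t1 * s2) * t2 := by rw [← he]
        _ = s1 * t1 * (s2 * t2) := by group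
    | inv g _ ihg =>
      obtain ⟨s, hs, t, ht, rfl⟩ := ihg
      obtain ⟨u, hu, he⟩ := hswap s⁻¹ (inv_mem hs) t⁻¹ (inv_mem ht)
      exact ⟨s⁻¹, inv_mem hs, u, hu, by rw [_root_.mul_inv_rev, he]⟩
  · rintro g ⟨s, hs, t, ht, rfl⟩
    exact mul_mem (hQ1Q2 hs) (hQsQ2 ht)

end GroupAux

section MC
variable {F : Type*} [Field F] {α β : F}

lemma mcA3 : (!![0,0,1;1,0,0;0,1,0] : Matrix (Fin 3) (Fin 3) F) *
    (!![0,0,1;1,0,0;0,1,0] * !![0,0,1;1,0,0;0,1,0]) = 1 := by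
  ext i j
  fin_cases i <;> fin_cases j <;> simp [Matrix.mul_apply, Fin.sum_univ_three, Matrix.one_apply, Matrix.vecHead, Matrix.vecTail]

lemma mcB3 (h3 : α ^ 3 = 1) (h0 : α ≠ 0) : (!![1,0,0;0,α,0;0,0,α⁻¹] : Matrix (Fin 3) (Fin 3) F) *
    (!![1,0,0;0,α,0;0,0,α⁻¹] * !![1,0,0;0,α,0;0,0,α⁻¹]) = 1 := by
  ext i j
  fin_cases i <;> fin_cases j <;>
    simp [Matrix.mul_apply, Fin.sum_univ_three, Matrix.one_apply, Matrix.vecHead, Matrix.vecTail] <;>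
    (try field_simp) <;>
    first
      | ring1
      | linear_combination h3
      | linear_combination -h3
      | linear_combination 2*h3
      | linear_combination -(2:F)*h3

lemma mcC3 (h9 : β ^ 9 = 1) : (!![β,0,0;0,β^4,0;0,0,β^4] : Matrix (Fin 3) (Fin 3) F) *
    (!![β,0,0;0,β^4,0;0,0,β^4] * !![β,0,0;0,β^4,0;0,0,β^4]) = β ^ 3 • 1 := by
  ext i j
  fin_cases i <;> fin_cases j <;>
    simp [Matrix.mul_apply, Fin.sum_univ_three, Matrix.one_apply, Matrix.vecHead, Matrix.vecTail] <;>
    first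
      | ring1
      | linear_combination β^3*h9
      | linear_combination -(β^3)*h9

lemma mcBC : (!![1,0,0;0,α,0;0,0,α⁻¹] : Matrix (Fin 3) (Fin 3) F) * !![β,0,0;0,β^4,0;0,0,β^4] =
    !![β,0,0;0,β^4,0;0,0,β^4] * !![1,0,0;0,α,0;0,0,α⁻¹] := by
  ext i j
  fin_cases i <;> fin_cases j <;>
    simp [Matrix.mul_apply, Fin.sum_univ_three, Matrix.vecHead, Matrix.vecTail] <;> ring

lemma mcAB (h3 : α ^ 3 = 1) (h0 : α ≠ 0) :
    (!![0,0,1;1,0,0;0,1,0] : Matrix (Fin 3) (Fin 3) F) * !![1,0,0;0,α,0;0,0,α⁻¹] * (α • 1) =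
    !![1,0,0;0,α,0;0,0,α⁻¹] * !![0,0,1;1,0,0;0,1,0] := by
  ext i j
  fin_cases i <;> fin_cases j <;>
    simp [Matrix.mul_apply, Fin.sum_univ_three, Matrix.one_apply, Matrix.vecHead, Matrix.vecTail] <;>
    field_simp <;> linear_combination h3

lemma mcAC (h9 : β ^ 9 = 1) (h0 : β ≠ 0) :
    (!![0,0,1;1,0,0;0,1,0] : Matrix (Fin 3) (Fin 3) F) * !![β,0,0;0,β^4,0;0,0,β^4] * ((β^3) • 1) =
    !![β,0,0;0,β^4,0;0,0,β^4] * !![0,0,1;1,0,0;0,1,0] * !![1,0,0;0,β^3,0;0,0,(β^3)⁻¹] := by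
  ext i j
  fin_cases i <;> fin_cases j <;>
    simp [Matrix.mul_apply, Fin.sum_univ_three, Matrix.one_apply, Matrix.vecHead, Matrix.vecTail] <;>
    (try field_simp) <;>
    first
      | ring1
      | linear_combination β*h9
      | linear_combination -β*h9
      | linear_combination β^3*h9
      | linear_combination -(β^3)*h9
      | linear_combination h9

end MC
def mval {F : Type*} [Field F] (X : ↥(SU3 F)) : Matrix (Fin 3) (Fin 3) F :=
  ((X : GL (Fin 3) F) : Matrix (Fin 3) (Fin 3) F)

lemma mval_mul {F : Type*} [Field F] (X Y : ↥(SU3 F)) : mval (X * Y) = mval X * mval Y := rfl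

lemma mval_one {F : Type*} [Field F] : mval (1 : ↥(SU3 F)) = 1 := rfl

lemma mval_pow {F : Type*} [Field F] (X : ↥(SU3 F)) (n : ℕ) : mval (X ^ n) = mval X ^ n := by
  unfold mval
  rw [SubmonoidClass.coe_pow, Units.val_pow_eq_pow_val]

lemma mval_inj {F : Type*} [Field F] {X Y : ↥(SU3 F)} (h : mval X = mval Y) : X = Y :=
  Subtype.ext (Units.ext h)

/-- in PSU₃(8), Q₁ = ⟨Ā,B̄⟩ and Q₊ = ⟨B̄,C̄⟩ are abelian of order
9, [Q₁,Q₊] = ⟨B̄⟩, and Q₂ = ⟨Ā,B̄,C̄⟩ equals the product Q₁·Q₊. -/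
theorem stmt_10 (F : Type*) [Field F] [Fintype F] (hF : Fintype.card F = 64)
    (ζ : Fˣ) (hζ : ∀ x : Fˣ, x ∈ Subgroup.zpowers ζ)
    (β α : F) (hβ : β = (ζ : F) ^ 7) (hα : α = β ^ 3)
    (A B C : ↥(SU3 F))
    (hA : ((A : GL (Fin 3) F) : Matrix (Fin 3) (Fin 3) F) = !![0,0,1; 1,0,0; 0,1,0])
    (hB : ((B : GL (Fin 3) F) : Matrix (Fin 3) (Fin 3) F) = !![1,0,0; 0,α,0; 0,0,α⁻¹])
    (hC : ((C : GL (Fin 3) F) : Matrix (Fin 3) (Fin 3) F) = !![β,0,0; 0,β^4,0; 0,0,β^4]) :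
    ∀ Q₁ Qs Q₂ : Subgroup (PSU3 F),
      Q₁ = Subgroup.closure {psuProj F A, psuProj F B} →
      Qs = Subgroup.closure {psuProj F B, psuProj F C} →
      Q₂ = Subgroup.closure {psuProj F A, psuProj F B, psuProj F C} →
      (Nat.card Q₁ = 9 ∧ ∀ g ∈ Q₁, ∀ h ∈ Q₁, g * h = h * g) ∧
      (Nat.card Qs = 9 ∧ ∀ g ∈ Qs, ∀ h ∈ Qs, g * h = h * g) ∧
      ⁅Q₁, Qs⁆ = Subgroup.closure {psuProj F B} ∧
      (Q₂ : Set (PSU3 F)) = ((Q₁ : Set (PSU3 F)) * (Qs : Set (PSU3 F)) : Set (PSU3 F)) := by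
  have hA' : mval A = !![0,0,1; 1,0,0; 0,1,0] := hA
  have hB' : mval B = !![1,0,0; 0,α,0; 0,0,α⁻¹] := hB
  have hC' : mval C = !![β,0,0; 0,β^4,0; 0,0,β^4] := hC
  -- field facts
  have hζn : ∀ n : ℕ, 0 < n → n < 63 → (ζ : F) ^ n ≠ 1 := by
    intro n hn1 hn2 h
    have hu : ζ ^ n = 1 := Units.ext (by rw [Units.val_pow_eq_pow_val, h, Units.val_one])
    have ho : orderOf ζ = 63 := by
      rw [orderOf_eq_card_of_forall_mem_zpowers hζ, Nat.card_units, Nat.card_eq_fintype_card, hF]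
    have h2 := orderOf_dvd_of_pow_eq_one hu
    rw [ho] at h2
    have := Nat.le_of_dvd hn1 h2
    omega
  have hz63 : (ζ : F) ^ 63 = 1 := by
    have ho : orderOf ζ = 63 := by
      rw [orderOf_eq_card_of_forall_mem_zpowers hζ, Nat.card_units, Nat.card_eq_fintype_card, hF]
    have h2 := pow_orderOf_eq_one ζ
    rw [ho] at h2
    rw [← Units.val_pow_eq_pow_val, h2, Units.val_one]
  have hβ9 : β ^ 9 = 1 := by rw [hβ, ← pow_mul]; exact hz63
  have hβ3 : β ^ 3 ≠ 1 := by rw [hβ, ← pow_mul]; exact hζn 21 (by norm_num) (by norm_num)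
  have hβ6 : β ^ 6 ≠ 1 := by rw [hβ, ← pow_mul]; exact hζn 42 (by norm_num) (by norm_num)
  have hβ0 : β ≠ 0 := by rw [hβ]; exact pow_ne_zero _ (Units.ne_zero ζ)
  have hα3 : α ^ 3 = 1 := by rw [hα, ← pow_mul]; exact hβ9
  have hα1 : α ≠ 1 := hα ▸ hβ3
  have hα0 : α ≠ 0 := hα ▸ pow_ne_zero _ hβ0
  have hα2 : α ^ 2 ≠ 1 := by
    intro h
    apply hα1
    have h' : α * α ^ 2 = 1 := by rw [← pow_succ']; exact hα3
    rwa [h, mul_one] at h'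
  have hβ4β : β ^ 4 ≠ β := by
    intro h
    apply hβ3
    have h2 : β * β ^ 3 = β * 1 := by rw [mul_one]; linear_combination h
    exact mul_left_cancel₀ hβ0 h2
  -- SU3-level relations
  have RA : A * (A * A) = 1 := mval_inj (by rw [mval_mul, mval_mul, hA', mval_one]; exact mcA3)
  have RB : B * (B * B) = 1 :=
    mval_inj (by rw [mval_mul, mval_mul, hB', mval_one]; exact mcB3 hα3 hα0)
  have hC3 : mval (C * (C * C)) = β ^ 3 • 1 := by
    rw [mval_mul, mval_mul, hC']; exact mcC3 hβ9
  have RCcen : C * (C * C) ∈ Subgroup.center ↥(SU3 F) := by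
    rw [Subgroup.mem_center_iff]
    intro g
    apply mval_inj
    rw [mval_mul g (C * (C * C)), mval_mul (C * (C * C)) g, hC3, Matrix.mul_smul, smul_mul, mul_one, one_mul]
  have RBC : B * C = C * B := mval_inj (by rw [mval_mul, mval_mul, hB', hC']; exact mcBC)
  have RAB : A * B * (C * (C * C)) = B * A := mval_inj (by
    rw [mval_mul (A * B) (C * (C * C)), mval_mul A B, mval_mul B A, hC3, hA', hB', ← hα]
    exact mcAB hα3 hα0)
  have RAC : A * C * (C * (C * C)) = C * A * B := mval_inj (by
    rw [mval_mul (A * C) (C * (C * C)), mval_mul A C, mval_mul (C * A) B, mval_mul C A, hC3, hA', hB', hC', hα]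
    exact mcAC hβ9 hβ0)
  -- PSU3-level relations
  have hproj1 : psuProj F (C * (C * C)) = 1 := (QuotientGroup.eq_one_iff _).mpr RCcen
  have ha3 : (psuProj F A) ^ 3 = 1 := by rw [pow_three, ← _root_.map_mul, ← _root_.map_mul, RA, _root_.map_one]
  have hb3 : (psuProj F B) ^ 3 = 1 := by rw [pow_three, ← _root_.map_mul, ← _root_.map_mul, RB, _root_.map_one]
  have hc3 : (psuProj F C) ^ 3 = 1 := by rw [pow_three, ← _root_.map_mul, ← _root_.map_mul]; exact hproj1
  have hab : psuProj F A * psuProj F B = psuProj F B * psuProj F A := by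
    have h2 := congrArg (psuProj F) RAB
    rwa [_root_.map_mul, hproj1, mul_one, _root_.map_mul, _root_.map_mul] at h2
  have hbc : psuProj F B * psuProj F C = psuProj F C * psuProj F B := by
    have h2 := congrArg (psuProj F) RBC
    rwa [_root_.map_mul, _root_.map_mul] at h2
  have hac : psuProj F A * psuProj F C = psuProj F C * psuProj F A * psuProj F B := by
    have h2 := congrArg (psuProj F) RAC
    rwa [_root_.map_mul, hproj1, mul_one, _root_.map_mul, _root_.map_mul, _root_.map_mul] at h2
  -- freeness
  have hkey : ∀ (X W : ↥(SU3 F)), X ∈ Subgroup.center ↥(SU3 F) →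
      mval W * mval X = mval X * mval W := fun X W hX =>
    congrArg mval (Subgroup.mem_center_iff.mp hX W)
  have hmem1 : ∀ (i j : ℕ), psuProj F A ^ i * psuProj F B ^ j = 1 →
      A ^ i * B ^ j ∈ Subgroup.center ↥(SU3 F) := by
    intro i j h
    rw [← _root_.map_pow, ← _root_.map_pow, ← _root_.map_mul] at h
    exact (QuotientGroup.eq_one_iff _).mp h
  have hmem2 : ∀ (i j : ℕ), psuProj F B ^ i * psuProj F C ^ j = 1 →
      B ^ i * C ^ j ∈ Subgroup.center ↥(SU3 F) := by
    intro i j h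
    rw [← _root_.map_pow, ← _root_.map_pow, ← _root_.map_mul] at h
    exact (QuotientGroup.eq_one_iff _).mp h
  have hcan : ∀ m k : ℕ, β ^ (m + k) = β ^ m → β ^ k = 1 := by
    intro m k hmk
    rw [pow_add] at hmk
    exact mul_left_cancel₀ (pow_ne_zero _ hβ0) (hmk.trans (mul_one _).symm)
  have hB'' : mval B = !![1,0,0; 0,β^3,0; 0,0,β^6] := by
    rw [hB', hα]
    ext i j
    fin_cases i <;> fin_cases j <;>
      simp [Matrix.vecHead, Matrix.vecTail]
    exact inv_eq_of_mul_eq_one_right (by rw [← pow_add]; exact hβ9)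
  have hf1 : ∀ u v : ZMod 3, psuProj F A ^ u.val * psuProj F B ^ v.val = 1 →
      u = 0 ∧ v = 0 := by
    intro u v h
    fin_cases u <;> fin_cases v <;> simp only at h ⊢
    · exact ⟨rfl, rfl⟩
    · exfalso
      have hw := hkey _ A (hmem1 0 1 h)
      simp only [mval_mul, mval_pow, hA', hB'', hC'] at hw
      have he := congrFun (congrFun hw 1) 0
      norm_num [pow_succ, Matrix.mul_fin_three] at he
      first
        | exact hβ3 (by first | linear_combination he | linear_combination -he)
        | exact he.elim (fun he => hβ3 (by first | linear_combination he | linear_combination -he)) hβ0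
    · exfalso
      have hw := hkey _ A (hmem1 0 2 h)
      simp only [mval_mul, mval_pow, hA', hB'', hC'] at hw
      have he := congrFun (congrFun hw 1) 0
      norm_num [pow_succ, Matrix.mul_fin_three] at he
      first
        | exact hβ6 (by first | linear_combination he | linear_combination -he)
        | exact he.elim (fun he => hβ6 (by first | linear_combination he | linear_combination -he)) hβ0
    · exfalso
      have hw := hkey _ C (hmem1 1 0 h)
      simp only [mval_mul, mval_pow, hA', hB'', hC'] at hw
      have he := congrFun (congrFun hw 0) 2
      norm_num [pow_succ, Matrix.mul_fin_three, Matrix.cons_val_two, Matrix.vecHead, Matrix.vecTail] at he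
      first
        | exact hβ3 (hcan 1 3 (by first | linear_combination he | linear_combination -he))
        | exact he.elim (fun he => hβ3 (hcan 1 3 (by first | linear_combination he | linear_combination -he))) hβ0
    · exfalso
      have hw := hkey _ C (hmem1 1 1 h)
      simp only [mval_mul, mval_pow, hA', hB'', hC'] at hw
      have he := congrFun (congrFun hw 0) 2
      norm_num [pow_succ, Matrix.mul_fin_three, Matrix.cons_val_two, Matrix.vecHead, Matrix.vecTail] at he
      first
        | exact hβ3 (hcan 7 3 (by first | linear_combination he | linear_combination -he))
        | exact he.elim (fun he => hβ3 (hcan 7 3 (by first | linear_combination he | linear_combination -he))) hβ0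
    · exfalso
      have hw := hkey _ C (hmem1 1 2 h)
      simp only [mval_mul, mval_pow, hA', hB'', hC'] at hw
      have he := congrFun (congrFun hw 0) 2
      norm_num [pow_succ, Matrix.mul_fin_three, Matrix.cons_val_two, Matrix.vecHead, Matrix.vecTail] at he
      first
        | exact hβ3 (hcan 13 3 (by first | linear_combination he | linear_combination -he))
        | exact he.elim (fun he => hβ3 (hcan 13 3 (by first | linear_combination he | linear_combination -he))) hβ0
    · exfalso
      have hw := hkey _ C (hmem1 2 0 h)
      simp only [mval_mul, mval_pow, hA', hB'', hC'] at hw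
      have he := congrFun (congrFun hw 0) 1
      norm_num [pow_succ, Matrix.mul_fin_three] at he
      first
        | exact hβ3 (hcan 1 3 (by first | linear_combination he | linear_combination -he))
        | exact he.elim (fun he => hβ3 (hcan 1 3 (by first | linear_combination he | linear_combination -he))) hβ0
    · exfalso
      have hw := hkey _ C (hmem1 2 1 h)
      simp only [mval_mul, mval_pow, hA', hB'', hC'] at hw
      have he := congrFun (congrFun hw 0) 1
      norm_num [pow_succ, Matrix.mul_fin_three] at he
      first
        | exact hβ3 (hcan 4 3 (by first | linear_combination he | linear_combination -he))
        | exact he.elim (fun he => hβ3 (hcan 4 3 (by first | linear_combination he | linear_combination -he))) hβ0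
    · exfalso
      have hw := hkey _ C (hmem1 2 2 h)
      simp only [mval_mul, mval_pow, hA', hB'', hC'] at hw
      have he := congrFun (congrFun hw 0) 1
      norm_num [pow_succ, Matrix.mul_fin_three] at he
      first
        | exact hβ3 (hcan 7 3 (by first | linear_combination he | linear_combination -he))
        | exact he.elim (fun he => hβ3 (hcan 7 3 (by first | linear_combination he | linear_combination -he))) hβ0
  have hf2 : ∀ u v : ZMod 3, psuProj F B ^ u.val * psuProj F C ^ v.val = 1 →
      u = 0 ∧ v = 0 := by
    intro u v h
    fin_cases u <;> fin_cases v <;> simp only at h ⊢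
    · exact ⟨rfl, rfl⟩
    · exfalso
      have hw := hkey _ A (hmem2 0 1 h)
      simp only [mval_mul, mval_pow, hA', hB'', hC'] at hw
      have he := congrFun (congrFun hw 1) 0
      norm_num [pow_succ, Matrix.mul_fin_three] at he
      first
        | exact hβ3 (hcan 1 3 (by first | linear_combination he | linear_combination -he))
        | exact he.elim (fun he => hβ3 (hcan 1 3 (by first | linear_combination he | linear_combination -he))) hβ0
    · exfalso
      have hw := hkey _ A (hmem2 0 2 h)
      simp only [mval_mul, mval_pow, hA', hB'', hC'] at hw
      have he := congrFun (congrFun hw 1) 0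
      norm_num [pow_succ, Matrix.mul_fin_three] at he
      first
        | exact hβ6 (hcan 2 6 (by first | linear_combination he | linear_combination -he))
        | exact he.elim (fun he => hβ6 (hcan 2 6 (by first | linear_combination he | linear_combination -he))) hβ0
    · exfalso
      have hw := hkey _ A (hmem2 1 0 h)
      simp only [mval_mul, mval_pow, hA', hB'', hC'] at hw
      have he := congrFun (congrFun hw 1) 0
      norm_num [pow_succ, Matrix.mul_fin_three] at he
      first
        | exact hβ3 (by first | linear_combination he | linear_combination -he)
        | exact he.elim (fun he => hβ3 (by first | linear_combination he | linear_combination -he)) hβ0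
    · exfalso
      have hw := hkey _ A (hmem2 1 1 h)
      simp only [mval_mul, mval_pow, hA', hB'', hC'] at hw
      have he := congrFun (congrFun hw 1) 0
      norm_num [pow_succ, Matrix.mul_fin_three] at he
      first
        | exact hβ6 (hcan 1 6 (by first | linear_combination he | linear_combination -he))
        | exact he.elim (fun he => hβ6 (hcan 1 6 (by first | linear_combination he | linear_combination -he))) hβ0
    · exfalso
      have hw := hkey _ A (hmem2 1 2 h)
      simp only [mval_mul, mval_pow, hA', hB'', hC'] at hw
      have he := congrFun (congrFun hw 2) 1
      norm_num [pow_succ, Matrix.mul_fin_three, Matrix.cons_val_two, Matrix.vecHead, Matrix.vecTail] at he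
      first
        | exact hβ3 (hcan 1 3 (by first | linear_combination he | linear_combination -he))
        | exact he.elim (fun he => hβ3 (hcan 1 3 (by first | linear_combination he | linear_combination -he))) hβ0
    · exfalso
      have hw := hkey _ A (hmem2 2 0 h)
      simp only [mval_mul, mval_pow, hA', hB'', hC'] at hw
      have he := congrFun (congrFun hw 1) 0
      norm_num [pow_succ, Matrix.mul_fin_three] at he
      first
        | exact hβ6 (by first | linear_combination he | linear_combination -he)
        | exact he.elim (fun he => hβ6 (by first | linear_combination he | linear_combination -he)) hβ0
    · exfalso
      have hw := hkey _ A (hmem2 2 1 h)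
      simp only [mval_mul, mval_pow, hA', hB'', hC'] at hw
      have he := congrFun (congrFun hw 2) 1
      norm_num [pow_succ, Matrix.mul_fin_three, Matrix.cons_val_two, Matrix.vecHead, Matrix.vecTail] at he
      first
        | exact hβ6 (hcan 6 6 (by first | linear_combination he | linear_combination -he))
        | exact he.elim (fun he => hβ6 (hcan 6 6 (by first | linear_combination he | linear_combination -he))) hβ0
    · exfalso
      have hw := hkey _ A (hmem2 2 2 h)
      simp only [mval_mul, mval_pow, hA', hB'', hC'] at hw
      have he := congrFun (congrFun hw 1) 0
      norm_num [pow_succ, Matrix.mul_fin_three] at he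
      first
        | exact hβ3 (by linear_combination (hcan 2 12 (by first | linear_combination he | linear_combination -he)) - β^3 * hβ9)
        | exact he.elim (fun he => hβ3 (by linear_combination (hcan 2 12 (by first | linear_combination he | linear_combination -he)) - β^3 * hβ9)) hβ0

  intro Q₁ Qs Q₂ hQ1 hQs hQ2
  subst hQ1 hQs hQ2
  exact main_abstract (psuProj F A) (psuProj F B) (psuProj F C)
    ha3 hb3 hc3 hab hbc hac hf1 hf2
end

section
/- In PΓU_3(8), the subgroup S = ⟨Ē, F̄, σ̄^3⟩ is isomorphic to Dih(18) × C_2, where Dih(18) is the dihedral group of order 18; more precisely S = ⟨Ē, F̄⟩ × ⟨\overline{Fσ^3}⟩ with ⟨Ē, F̄⟩ ≅ Dih(18) and \overline{Fσ^3} an involution. -/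
section DihAux

variable {G : Type*} [Group G] {a b : G}

private lemma val_cast_zmod {n : ℕ} [NeZero n] (i : ZMod n) :
    ((i.val : ℕ) : ZMod n) = i := ZMod.natCast_rightInverse i

private lemma pow_congr_mod {n : ℕ} [NeZero n] (han : a ^ n = 1) {p q : ℕ}
    (h : (p : ZMod n) = q) : a ^ p = a ^ q := by
  have hmod : ∀ k : ℕ, a ^ k = a ^ (k % n) := by
    intro k
    conv_lhs => rw [← Nat.div_add_mod k n, pow_add, pow_mul, han, one_pow, _root_.one_mul]
  rw [hmod p, hmod q, (ZMod.natCast_eq_natCast_iff' p q n).mp h]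

private lemma a_pow_mul_b (hb2 : b ^ 2 = 1) (hrel : b * a * b = a⁻¹) (k : ℕ) :
    a ^ k * b = b * (a ^ k)⁻¹ := by
  have hbb : b * b = 1 := by rw [← pow_two]; exact hb2
  have hab : a * b = b * a⁻¹ := by
    conv_lhs => rw [← _root_.one_mul (a * b), ← hbb]
    rw [mul_assoc, ← mul_assoc b a b, hrel]
  induction k with
  | zero => simp
  | succ n ih =>
    calc a ^ (n+1) * b = a ^ n * (a * b) := by rw [pow_succ, mul_assoc]
    _ = (a ^ n * b) * a⁻¹ := by rw [hab, ← mul_assoc]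
    _ = b * ((a ^ n)⁻¹ * a⁻¹) := by rw [ih, mul_assoc]
    _ = b * (a ^ (n+1))⁻¹ := by rw [← _root_.mul_inv_rev, ← pow_succ']

/-- underlying map from DihedralGroup 9 -/
private def dihMap (a b : G) : DihedralGroup 9 → G
  | .r i => a ^ i.val
  | .sr i => b * a ^ i.val

private lemma dihMap_hom (ha9 : a ^ 9 = 1) (hb2 : b ^ 2 = 1) (hrel : b * a * b = a⁻¹) :
    ∀ x y : DihedralGroup 9, dihMap a b (x * y) = dihMap a b x * dihMap a b y := by
  have key : ∀ i j : ZMod 9, a ^ (i + j).val = a ^ i.val * a ^ j.val := by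
    intro i j
    rw [← pow_add]
    exact pow_congr_mod ha9 (by simp only [Nat.cast_add, val_cast_zmod])
  have key2 : ∀ i j : ZMod 9, a ^ (j - i).val = (a ^ i.val)⁻¹ * a ^ j.val := by
    intro i j
    have h : a ^ i.val * a ^ (j - i).val = a ^ j.val := by
      rw [← pow_add]
      exact pow_congr_mod ha9 (by
        simp only [Nat.cast_add, val_cast_zmod]
        ring)
    rw [← h]; group
  have hbb : b * b = 1 := by rw [← pow_two]; exact hb2
  rintro (i | i) (j | j)
  · show a ^ (i + j).val = _
    exact key i j
  · show b * a ^ (j - i).val = a ^ i.val * (b * a ^ j.val)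
    rw [← mul_assoc, a_pow_mul_b hb2 hrel, key2 i j, mul_assoc]
  · show b * a ^ (i + j).val = b * a ^ i.val * a ^ j.val
    rw [key, mul_assoc]
  · show a ^ (j - i).val = b * a ^ i.val * (b * a ^ j.val)
    rw [key2 i j]
    symm
    calc b * a ^ i.val * (b * a ^ j.val) = b * (a ^ i.val * b) * a ^ j.val := by group
    _ = b * (b * (a ^ i.val)⁻¹) * a ^ j.val := by rw [a_pow_mul_b hb2 hrel]
    _ = (b * b) * ((a ^ i.val)⁻¹ * a ^ j.val) := by group
    _ = (a ^ i.val)⁻¹ * a ^ j.val := by rw [hbb, _root_.one_mul]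

/-- homomorphism from DihedralGroup 9 -/
private def dihHom (ha9 : a ^ 9 = 1) (hb2 : b ^ 2 = 1) (hrel : b * a * b = a⁻¹) :
    DihedralGroup 9 →* G where
  toFun := dihMap a b
  map_one' := by show a ^ (0 : ZMod 9).val = 1; simp
  map_mul' := dihMap_hom ha9 hb2 hrel

private lemma dihHom_inj (ha9 : a ^ 9 = 1) (hord : ∀ k : ℕ, a ^ k = 1 → 9 ∣ k)
    (hb2 : b ^ 2 = 1) (hrel : b * a * b = a⁻¹) :
    Function.Injective (dihHom ha9 hb2 hrel) := by
  have ha2 : a ^ 2 ≠ 1 := fun h => by have := hord 2 h; omega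
  apply (injective_iff_map_eq_one _).mpr
  rintro (i | i) h
  · have h' : a ^ i.val = 1 := h
    have h9 : 9 ∣ i.val := hord _ h'
    have hlt : i.val < 9 := ZMod.val_lt i
    have hv : i.val = 0 := by omega
    have : i = 0 := by rwa [← ZMod.val_eq_zero]
    rw [this]; rfl
  · exfalso
    have h' : b * a ^ i.val = 1 := h
    have hb' : b = (a ^ i.val)⁻¹ := eq_inv_of_mul_eq_one_left h'
    have hcomm : Commute b a := by
      rw [hb']
      exact (((Commute.refl a).pow_right i.val).inv_right).symm
    apply ha2
    have haa : a⁻¹ = a := by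
      rw [← hrel, hcomm.eq, mul_assoc, ← pow_two, hb2, _root_.mul_one]
    rw [pow_two]
    nth_rewrite 1 [← haa]
    exact inv_mul_cancel a

private lemma dihHom_range (ha9 : a ^ 9 = 1) (hb2 : b ^ 2 = 1) (hrel : b * a * b = a⁻¹) :
    (dihHom ha9 hb2 hrel).range = Subgroup.closure {a, b} := by
  apply le_antisymm
  · rintro _ ⟨x, rfl⟩
    have hamem : a ∈ Subgroup.closure {a, b} :=
      Subgroup.subset_closure (Set.mem_insert _ _)
    have hbmem : b ∈ Subgroup.closure {a, b} :=
      Subgroup.subset_closure (Set.mem_insert_of_mem _ rfl)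
    cases x with
    | r i => exact pow_mem hamem _
    | sr i => exact mul_mem hbmem (pow_mem hamem _)
  · rw [Subgroup.closure_le]
    rintro x hx
    rcases hx with h | h
    · exact ⟨DihedralGroup.r 1, by
        show a ^ (1 : ZMod 9).val = x
        rw [h, show ((1 : ZMod 9).val) = 1 from rfl, pow_one]⟩
    · exact ⟨DihedralGroup.sr 0, by
        show b * a ^ (0 : ZMod 9).val = x
        rw [Set.mem_singleton_iff] at h
        rw [h]; simp [ZMod.val_zero]⟩

end DihAux

open Matrix

set_option maxHeartbeats 1600000

/-- in PΓU₃(8) (axiomatized as a group Γ generated by the image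
of SU₃(8) under a homomorphism π with kernel the center, together with the
field automorphism σ of order 6 acting entrywise by x ↦ x²), the subgroup
S = ⟨Ē, F̄, σ̄³⟩ is isomorphic to Dih(18) × C₂; more precisely
S = ⟨Ē, F̄⟩ ⊔ ⟨F̄σ³⟩ with ⟨Ē, F̄⟩ ≅ Dih(18), the element F̄σ³ an involution
commuting with ⟨Ē, F̄⟩. -/
theorem stmt_11 (F : Type*) [Field F] [Fintype F] (hF : Fintype.card F = 64)
    (ζ : Fˣ) (hζ : ∀ x : Fˣ, x ∈ Subgroup.zpowers ζ)
    (β : F) (hβ : β = (ζ : F) ^ 7)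
    (Γ : Type*) [Group Γ] (π : ↥(SU3 F) →* Γ)
    (hker : π.ker = Subgroup.center ↥(SU3 F))
    (s : Γ) (hs : orderOf s = 6)
    (hconj : ∀ M M' : ↥(SU3 F),
      ((M' : GL (Fin 3) F) : Matrix (Fin 3) (Fin 3) F) =
        ((M : GL (Fin 3) F) : Matrix (Fin 3) (Fin 3) F).map (fun x => x ^ 2) →
      s * π M * s⁻¹ = π M')
    (hgen : Subgroup.closure (Set.range π ∪ {s}) = ⊤)
    (E Fm : ↥(SU3 F))
    (hE : ((E : GL (Fin 3) F) : Matrix (Fin 3) (Fin 3) F) = !![1,0,0; 0,β,0; 0,0,β⁻¹])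
    (hFm : ((Fm : GL (Fin 3) F) : Matrix (Fin 3) (Fin 3) F) = !![1,0,0; 0,0,1; 0,1,0]) :
    ∀ S S₀ : Subgroup Γ, ∀ t : Γ,
      t = π Fm * s ^ 3 →
      S = Subgroup.closure {π E, π Fm, s ^ 3} →
      S₀ = Subgroup.closure {π E, π Fm} →
      (t ^ 2 = 1 ∧ t ≠ 1) ∧
      (∀ g ∈ S₀, Commute g t) ∧
      S = S₀ ⊔ Subgroup.closure {t} ∧
      S₀ ⊓ Subgroup.closure {t} = ⊥ ∧
      Nonempty (↥S₀ ≃* DihedralGroup 9) ∧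
      Nonempty (↥S ≃* DihedralGroup 9 × Multiplicative (ZMod 2)) := by
  intro S S₀ t ht hS hS₀
  have hs3 : s ^ 3 = s * s * s := by rw [pow_succ, pow_succ, pow_one]
  -- basic facts about β
  have hβ0 : β ≠ 0 := by rw [hβ]; exact pow_ne_zero _ (Units.ne_zero ζ)
  have hζord : orderOf ζ = 63 := by
    rw [orderOf_eq_card_of_forall_mem_zpowers hζ, Nat.card_units,
      Nat.card_eq_fintype_card, hF]
  have hβord : ∀ k : ℕ, β ^ k = 1 → 9 ∣ k := by
    intro k hk
    have h1 : ((ζ : F) ^ 7) ^ k = 1 := by rw [← hβ]; exact hk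
    have hu : (ζ ^ 7) ^ k = 1 := Units.ext (by push_cast; exact h1)
    have hdvd : orderOf (ζ ^ 7) ∣ k := orderOf_dvd_of_pow_eq_one hu
    have h9 : orderOf (ζ ^ 7) = 9 := by
      rw [orderOf_pow, hζord]
      decide
    rwa [h9] at hdvd
  have hβ9 : β ^ 9 = 1 := by
    have h63 : (ζ ^ 63 : Fˣ) = 1 := by rw [← hζord]; exact pow_orderOf_eq_one ζ
    have hc : ((ζ : F)) ^ 63 = 1 := by
      calc ((ζ : F)) ^ 63 = ((ζ ^ 63 : Fˣ) : F) := by push_cast; ring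
      _ = 1 := by rw [h63]; rfl
    calc β ^ 9 = ((ζ : F)) ^ 63 := by rw [hβ]; ring
    _ = 1 := hc
  have h63 : β ^ 63 = 1 := by
    calc β ^ 63 = (β ^ 9) ^ 7 := by ring
    _ = 1 := by rw [hβ9]; ring
  -- coercion helpers
  have ext' : ∀ M N : ↥(SU3 F),
      ((M : GL (Fin 3) F) : Matrix (Fin 3) (Fin 3) F)
        = ((N : GL (Fin 3) F) : Matrix (Fin 3) (Fin 3) F) → M = N :=
    fun M N h => Subtype.ext (Units.ext h)
  have hpow : ∀ (M : ↥(SU3 F)) (k : ℕ),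
      (((M ^ k : ↥(SU3 F)) : GL (Fin 3) F) : Matrix (Fin 3) (Fin 3) F)
        = ((M : GL (Fin 3) F) : Matrix (Fin 3) (Fin 3) F) ^ k := by
    intro M k; push_cast; rfl
  have hEdiag : ((E : GL (Fin 3) F) : Matrix (Fin 3) (Fin 3) F)
      = Matrix.diagonal ![1, β, β⁻¹] := by
    rw [hE]; ext i j
    fin_cases i <;> fin_cases j <;>
      simp [Matrix.diagonal, Matrix.vecHead, Matrix.vecTail]
  -- powers of diagonal-matrix elements of SU3
  have hdpow : ∀ (N : ↥(SU3 F)) (d : Fin 3 → F),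
      ((N : GL (Fin 3) F) : Matrix (Fin 3) (Fin 3) F) = Matrix.diagonal d →
      ∀ k : ℕ, (((N ^ k : ↥(SU3 F)) : GL (Fin 3) F) : Matrix (Fin 3) (Fin 3) F)
        = Matrix.diagonal (d ^ k) := by
    intro N d hN k
    rw [hpow, hN, Matrix.diagonal_pow]
  -- conjugation by s³ of diagonal elements
  have hdiagconj : ∀ (N : ↥(SU3 F)) (d : Fin 3 → F),
      ((N : GL (Fin 3) F) : Matrix (Fin 3) (Fin 3) F) = Matrix.diagonal d →
      s ^ 3 * π N * (s ^ 3)⁻¹ = π (N ^ 8) := by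
    intro N d hN
    have c : ∀ k m : ℕ, m = 2 * k → s * π (N ^ k) * s⁻¹ = π (N ^ m) := by
      intro k m hm
      apply hconj
      have hv : d ^ m = fun i => (d ^ k) i ^ 2 := by
        funext i
        show (d ^ m) i = (d ^ k) i ^ 2
        simp only [Pi.pow_apply, hm, mul_comm 2 k, pow_mul]
      rw [hdpow N d hN, hdpow N d hN, hv,
        show ((Matrix.diagonal (d ^ k)).map fun x => x ^ 2)
            = Matrix.diagonal (fun i => (d ^ k) i ^ 2) from
          Matrix.diagonal_map (by norm_num)]
    have c1 : s * π N * s⁻¹ = π (N ^ 2) := by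
      have h := c 1 2 rfl
      rwa [pow_one] at h
    have c2 : s * π (N ^ 2) * s⁻¹ = π (N ^ 4) := c 2 4 rfl
    have c4 : s * π (N ^ 4) * s⁻¹ = π (N ^ 8) := c 4 8 rfl
    have hexp : s ^ 3 * π N * (s ^ 3)⁻¹ = s * (s * (s * π N * s⁻¹) * s⁻¹) * s⁻¹ := by
      rw [hs3]; group
    rw [hexp, c1, c2, c4]
  -- E has order 9
  have hE9 : E ^ 9 = 1 := by
    apply ext' _ _
    rw [hdpow E _ hEdiag 9]
    ext i j
    fin_cases i <;> fin_cases j <;>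
      simp [Matrix.diagonal, Matrix.one_apply, Matrix.vecHead, Matrix.vecTail,
        hβ9, inv_pow]
  -- conjugation of π E and π Fm by s³
  have hzE : s ^ 3 * π E * (s ^ 3)⁻¹ = (π E)⁻¹ := by
    rw [hdiagconj E _ hEdiag]
    have h8 : (E ^ 8 : ↥(SU3 F)) = E⁻¹ := by
      apply eq_inv_of_mul_eq_one_left
      rw [← pow_succ]; exact hE9
    rw [h8, _root_.map_inv]
  have hzF : s ^ 3 * π Fm * (s ^ 3)⁻¹ = π Fm := by
    have c : s * π Fm * s⁻¹ = π Fm := by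
      apply hconj
      rw [hFm]
      ext i j
      fin_cases i <;> fin_cases j <;>
        simp [Matrix.map_apply, Matrix.vecHead, Matrix.vecTail]
    have hexp : s ^ 3 * π Fm * (s ^ 3)⁻¹ = s * (s * (s * π Fm * s⁻¹) * s⁻¹) * s⁻¹ := by
      rw [hs3]; group
    rw [hexp, c, c, c]
  -- relations among E, Fm
  have hFm2 : Fm * Fm = 1 := by
    apply ext' _ _
    have hco : (((Fm * Fm : ↥(SU3 F)) : GL (Fin 3) F) : Matrix (Fin 3) (Fin 3) F)
        = ((Fm : GL (Fin 3) F) : Matrix (Fin 3) (Fin 3) F)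
          * ((Fm : GL (Fin 3) F) : Matrix (Fin 3) (Fin 3) F) := rfl
    rw [hco, hFm]
    ext i j
    fin_cases i <;> fin_cases j <;>
      simp [Matrix.mul_apply, Fin.sum_univ_three, Matrix.one_apply,
        Matrix.vecHead, Matrix.vecTail]
  have hFmInv : Fm⁻¹ = Fm := by
    rw [← _root_.mul_one Fm⁻¹, ← hFm2, ← mul_assoc, inv_mul_cancel, _root_.one_mul]
  have hFEF : Fm * E * Fm = E⁻¹ := by
    apply eq_inv_of_mul_eq_one_left
    apply ext' _ _
    have hmat1 : (!![1,0,0; 0,0,1; 0,1,0] : Matrix (Fin 3) (Fin 3) F)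
        * !![1,0,0; 0,β,0; 0,0,β⁻¹] * !![1,0,0; 0,0,1; 0,1,0]
        = !![1,0,0; 0,β⁻¹,0; 0,0,β] := by
      ext i j
      fin_cases i <;> fin_cases j <;>
        simp [Matrix.mul_apply, Fin.sum_univ_three, Matrix.vecHead, Matrix.vecTail]
    have hco : (((Fm * E * Fm * E : ↥(SU3 F)) : GL (Fin 3) F) : Matrix (Fin 3) (Fin 3) F)
        = ((Fm : GL (Fin 3) F) : Matrix (Fin 3) (Fin 3) F)
          * ((E : GL (Fin 3) F) : Matrix (Fin 3) (Fin 3) F)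
          * ((Fm : GL (Fin 3) F) : Matrix (Fin 3) (Fin 3) F)
          * ((E : GL (Fin 3) F) : Matrix (Fin 3) (Fin 3) F) := rfl
    rw [hco, hE, hFm, hmat1]
    ext i j
    fin_cases i <;> fin_cases j <;>
      simp [Matrix.mul_apply, Fin.sum_univ_three, Matrix.one_apply,
        Matrix.vecHead, Matrix.vecTail, inv_mul_cancel₀ hβ0, mul_inv_cancel₀ hβ0]
  -- relations in Γ
  have hb2 : (π Fm) ^ 2 = 1 := by rw [pow_two, ← _root_.map_mul, hFm2, _root_.map_one]
  have hbinv : (π Fm)⁻¹ = π Fm := by rw [← _root_.map_inv, hFmInv]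
  have ha9 : (π E) ^ 9 = 1 := by rw [← _root_.map_pow, hE9, _root_.map_one]
  have hrel : π Fm * π E * π Fm = (π E)⁻¹ := by
    rw [← _root_.map_mul, ← _root_.map_mul, hFEF, _root_.map_inv]
  have hz2 : (s ^ 3) ^ 2 = 1 := by
    rw [← pow_mul]
    rw [show 3 * 2 = 6 from rfl, ← hs]
    exact pow_orderOf_eq_one s
  -- kernel = center
  have hcen : ∀ N : ↥(SU3 F), π N = 1 → ∀ g : ↥(SU3 F), g * N = N * g := by
    intro N hN g
    have hm : N ∈ π.ker := hN
    rw [hker] at hm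
    exact Subgroup.mem_center_iff.mp hm g
  -- order of π E is 9
  have hord : ∀ k : ℕ, (π E) ^ k = 1 → 9 ∣ k := by
    intro k hk
    rw [← _root_.map_pow] at hk
    have hc := hcen _ hk Fm
    have hmat := congrArg
      (fun N : ↥(SU3 F) => ((N : GL (Fin 3) F) : Matrix (Fin 3) (Fin 3) F)) hc
    have hco1 : (((Fm * E ^ k : ↥(SU3 F)) : GL (Fin 3) F) : Matrix (Fin 3) (Fin 3) F)
        = ((Fm : GL (Fin 3) F) : Matrix (Fin 3) (Fin 3) F)
          * (((E ^ k : ↥(SU3 F)) : GL (Fin 3) F) : Matrix (Fin 3) (Fin 3) F) := rfl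
    have hco2 : (((E ^ k * Fm : ↥(SU3 F)) : GL (Fin 3) F) : Matrix (Fin 3) (Fin 3) F)
        = (((E ^ k : ↥(SU3 F)) : GL (Fin 3) F) : Matrix (Fin 3) (Fin 3) F)
          * ((Fm : GL (Fin 3) F) : Matrix (Fin 3) (Fin 3) F) := rfl
    simp only [hco1, hco2, hdpow E _ hEdiag k, hFm] at hmat
    have h12 := congrFun (congrFun hmat 1) 2
    simp [Matrix.mul_apply, Fin.sum_univ_three, Matrix.diagonal,
      Matrix.vecHead, Matrix.vecTail] at h12
    -- h12 should say β ^ k = β⁻¹ ^ k (in some order)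
    have h2k : β ^ (2 * k) = 1 := by
      have hββ : β ^ k * β⁻¹ ^ k = 1 := by
        rw [← mul_pow, mul_inv_cancel₀ hβ0, one_pow]
      rw [two_mul, pow_add]
      nth_rewrite 1 [← h12]
      exact inv_mul_cancel₀ (pow_ne_zero _ hβ0)
    have h9 := hβord _ h2k
    omega
  -- t is an involution
  have ht2 : t ^ 2 = 1 := by
    rw [ht, pow_two]
    calc π Fm * s ^ 3 * (π Fm * s ^ 3)
        = π Fm * (s ^ 3 * π Fm * (s ^ 3)⁻¹) * (s ^ 3) ^ 2 := by group
    _ = π Fm * π Fm * 1 := by rw [hzF, hz2]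
    _ = 1 := by rw [_root_.mul_one, ← pow_two, hb2]
  -- t commutes with π E and π Fm
  have htconj : ∀ g : Γ, t * g * t⁻¹ = g → Commute g t := by
    intro g hg
    have h : t * g = g * t := by
      rw [mul_inv_eq_iff_eq_mul] at hg
      exact hg
    exact h.symm
  have tcommA : Commute (π E) t := by
    apply htconj
    rw [ht]
    have hstep : π Fm * s ^ 3 * π E * (π Fm * s ^ 3)⁻¹
        = π Fm * (s ^ 3 * π E * (s ^ 3)⁻¹) * (π Fm)⁻¹ := by group
    rw [hstep, hzE, hbinv]
    rw [← _root_.map_inv, ← _root_.map_mul, ← _root_.map_mul]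
    congr 1
    calc Fm * E⁻¹ * Fm = Fm⁻¹ * E⁻¹ * Fm⁻¹ := by rw [hFmInv]
    _ = (Fm * E * Fm)⁻¹ := by rw [_root_.mul_inv_rev, _root_.mul_inv_rev]; group
    _ = E := by rw [hFEF, inv_inv]
  have tcommB : Commute (π Fm) t := by
    apply htconj
    rw [ht]
    have hstep : π Fm * s ^ 3 * π Fm * (π Fm * s ^ 3)⁻¹
        = π Fm * (s ^ 3 * π Fm * (s ^ 3)⁻¹) * (π Fm)⁻¹ := by group
    rw [hstep, hzF, hbinv]
    calc π Fm * π Fm * π Fm = (π Fm * π Fm) * π Fm := by group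
    _ = π Fm := by rw [← _root_.map_mul, hFm2, _root_.map_one, _root_.one_mul]
  -- auxiliary elements of SU3
  have hMunit1 : Matrix.diagonal ![β^7, β, β] * Matrix.diagonal ![β^2, β^8, β^8]
      = (1 : Matrix (Fin 3) (Fin 3) F) := by
    ext i j
    fin_cases i <;> fin_cases j <;>
      simp [Matrix.mul_apply, Fin.sum_univ_three, Matrix.diagonal, Matrix.one_apply,
        Matrix.vecHead, Matrix.vecTail, ← pow_succ, ← pow_succ', ← pow_add, hβ9]
  have hMunit2 : Matrix.diagonal ![β^2, β^8, β^8] * Matrix.diagonal ![β^7, β, β]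
      = (1 : Matrix (Fin 3) (Fin 3) F) := by
    ext i j
    fin_cases i <;> fin_cases j <;>
      simp [Matrix.mul_apply, Fin.sum_univ_three, Matrix.diagonal, Matrix.one_apply,
        Matrix.vecHead, Matrix.vecTail, ← pow_succ, ← pow_succ', ← pow_add, hβ9]
  have hMmem : (⟨Matrix.diagonal ![β^7, β, β], Matrix.diagonal ![β^2, β^8, β^8],
      hMunit1, hMunit2⟩ : GL (Fin 3) F) ∈ SU3 F := by
    apply Subgroup.subset_closure
    constructor
    · show (Matrix.diagonal ![β^7, β, β]).det = 1
      rw [Matrix.det_diagonal]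
      simp [Fin.prod_univ_three, Matrix.vecHead, Matrix.vecTail, ← pow_succ,
        ← pow_succ', ← pow_add, hβ9]
    · intro x y
      show (∑ i, (Matrix.diagonal ![β^7, β, β]).mulVec x i *
        ((Matrix.diagonal ![β^7, β, β]).mulVec y i) ^ 8) = _
      simp only [Matrix.mulVec_diagonal, Fin.sum_univ_three]
      have e0 : ![β^7, β, β] 0 = β^7 := rfl
      have e1 : ![β^7, β, β] 1 = β := rfl
      have e2 : ![β^7, β, β] 2 = β := rfl
      rw [e0, e1, e2]
      calc β ^ 7 * x 0 * (β ^ 7 * y 0) ^ 8 + β * x 1 * (β * y 1) ^ 8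
            + β * x 2 * (β * y 2) ^ 8
          = β^63 * (x 0 * y 0 ^ 8) + β^9 * (x 1 * y 1 ^ 8) + β^9 * (x 2 * y 2 ^ 8) := by
            ring
      _ = x 0 * y 0 ^ 8 + x 1 * y 1 ^ 8 + x 2 * y 2 ^ 8 := by rw [h63, hβ9]; ring
  set M : ↥(SU3 F) := ⟨⟨Matrix.diagonal ![β^7, β, β], Matrix.diagonal ![β^2, β^8, β^8],
      hMunit1, hMunit2⟩, hMmem⟩ with hMdef
  have hMdiag : ((M : GL (Fin 3) F) : Matrix (Fin 3) (Fin 3) F)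
      = Matrix.diagonal ![β^7, β, β] := rfl
  have hCunit1 : (!![0,1,0; 0,0,1; 1,0,0] : Matrix (Fin 3) (Fin 3) F)
      * !![0,0,1; 1,0,0; 0,1,0] = 1 := by
    ext i j
    fin_cases i <;> fin_cases j <;>
      simp [Matrix.mul_apply, Fin.sum_univ_three, Matrix.one_apply,
        Matrix.vecHead, Matrix.vecTail]
  have hCunit2 : (!![0,0,1; 1,0,0; 0,1,0] : Matrix (Fin 3) (Fin 3) F)
      * !![0,1,0; 0,0,1; 1,0,0] = 1 := by
    ext i j
    fin_cases i <;> fin_cases j <;>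
      simp [Matrix.mul_apply, Fin.sum_univ_three, Matrix.one_apply,
        Matrix.vecHead, Matrix.vecTail]
  have hCmem : (⟨!![0,1,0; 0,0,1; 1,0,0], !![0,0,1; 1,0,0; 0,1,0],
      hCunit1, hCunit2⟩ : GL (Fin 3) F) ∈ SU3 F := by
    apply Subgroup.subset_closure
    constructor
    · show (!![(0:F),1,0; 0,0,1; 1,0,0]).det = 1
      simp [Matrix.det_fin_three]
    · intro x y
      show (∑ i, (!![(0:F),1,0; 0,0,1; 1,0,0]).mulVec x i *
        ((!![(0:F),1,0; 0,0,1; 1,0,0]).mulVec y i) ^ 8) = _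
      simp [Matrix.mulVec, dotProduct, Fin.sum_univ_three,
        Matrix.vecHead, Matrix.vecTail]
      ring
  set C : ↥(SU3 F) := ⟨⟨!![0,1,0; 0,0,1; 1,0,0], !![0,0,1; 1,0,0; 0,1,0],
      hCunit1, hCunit2⟩, hCmem⟩ with hCdef
  -- t ≠ 1
  have htne : t ≠ 1 := by
    intro h1
    have hz_eq : s ^ 3 = π Fm := by
      rw [ht] at h1
      have h2 : s ^ 3 = (π Fm)⁻¹ := eq_inv_of_mul_eq_one_right h1
      rw [h2, hbinv]
    have hM9 : M ^ 9 = 1 := by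
      apply ext' _ _
      rw [hdpow M _ hMdiag 9]
      ext i j
      fin_cases i <;> fin_cases j <;>
        simp [Matrix.diagonal, Matrix.one_apply, Matrix.vecHead, Matrix.vecTail,
          ← pow_mul, hβ9]
      · calc β ^ (7 * 9) = (β ^ 9) ^ 7 := by ring
        _ = 1 := by rw [hβ9]; ring
    have hM8 : (M ^ 8 : ↥(SU3 F)) = M⁻¹ := by
      apply eq_inv_of_mul_eq_one_left
      rw [← pow_succ]; exact hM9
    have hzM := hdiagconj M _ hMdiag
    rw [hz_eq, hM8, _root_.map_inv] at hzM
    have hFmM : Fm * M = M * Fm := by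
      apply ext' _ _
      have hco1 : (((Fm * M : ↥(SU3 F)) : GL (Fin 3) F) : Matrix (Fin 3) (Fin 3) F)
          = ((Fm : GL (Fin 3) F) : Matrix (Fin 3) (Fin 3) F)
            * ((M : GL (Fin 3) F) : Matrix (Fin 3) (Fin 3) F) := rfl
      have hco2 : (((M * Fm : ↥(SU3 F)) : GL (Fin 3) F) : Matrix (Fin 3) (Fin 3) F)
          = ((M : GL (Fin 3) F) : Matrix (Fin 3) (Fin 3) F)
            * ((Fm : GL (Fin 3) F) : Matrix (Fin 3) (Fin 3) F) := rfl
      rw [hco1, hco2, hFm, hMdiag]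
      ext i j
      fin_cases i <;> fin_cases j <;>
        simp [Matrix.mul_apply, Fin.sum_univ_three, Matrix.diagonal,
          Matrix.vecHead, Matrix.vecTail]
    have hMfix : π Fm * π M * (π Fm)⁻¹ = π M := by
      rw [hbinv]
      have hh : π Fm * π M * π Fm = π (Fm * M * Fm) := by
        rw [_root_.map_mul, _root_.map_mul]
      rw [hh, hFmM, mul_assoc, hFm2, mul_one]
    rw [hMfix] at hzM
    have hMM : π (M * M) = 1 := by
      rw [_root_.map_mul]
      nth_rewrite 2 [hzM]
      exact mul_inv_cancel (π M)
    have hc := hcen _ hMM C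
    have hmat := congrArg
      (fun N : ↥(SU3 F) => ((N : GL (Fin 3) F) : Matrix (Fin 3) (Fin 3) F)) hc
    have hco1 : (((C * (M * M) : ↥(SU3 F)) : GL (Fin 3) F) : Matrix (Fin 3) (Fin 3) F)
        = (!![0,1,0; 0,0,1; 1,0,0] : Matrix (Fin 3) (Fin 3) F)
          * (Matrix.diagonal ![β^7, β, β] * Matrix.diagonal ![β^7, β, β]) := rfl
    have hco2 : ((((M * M) * C : ↥(SU3 F)) : GL (Fin 3) F) : Matrix (Fin 3) (Fin 3) F)
        = (Matrix.diagonal ![β^7, β, β] * Matrix.diagonal ![β^7, β, β])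
          * !![0,1,0; 0,0,1; 1,0,0] := rfl
    simp only [hco1, hco2] at hmat
    have h01 := congrFun (congrFun hmat 0) 1
    simp [Matrix.mul_apply, Fin.sum_univ_three, Matrix.diagonal,
      Matrix.vecHead, Matrix.vecTail] at h01
    have hβ6 : β ^ 6 = 1 := by
      have h14 : β ^ 14 = β ^ 2 := by
        calc β ^ 14 = β ^ 7 * β ^ 7 := by ring
        _ = β * β := by rw [← h01]
        _ = β ^ 2 := by ring
      have h18 : β ^ 18 = β ^ 6 := by
        calc β ^ 18 = β ^ 14 * β ^ 4 := by ring
        _ = β ^ 2 * β ^ 4 := by rw [h14]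
        _ = β ^ 6 := by ring
      rw [← h18]
      calc β ^ 18 = (β ^ 9) ^ 2 := by ring
      _ = 1 := by rw [hβ9]; ring
    have := hβord 6 hβ6
    omega
  -- the dihedral homomorphism
  set f : DihedralGroup 9 →* Γ := dihHom ha9 hb2 hrel with hf
  have finj : Function.Injective f := dihHom_inj ha9 hord hb2 hrel
  have frange : f.range = S₀ := by rw [hf, dihHom_range, hS₀]
  -- Commute (f x) t for all x
  have hcft : ∀ x : DihedralGroup 9, Commute (f x) t := by
    rintro (i | i)
    · exact tcommA.pow_left _
    · exact Commute.mul_left tcommB (tcommA.pow_left _)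
  -- every element of S₀ commutes with t
  have hS₀comm : ∀ g ∈ S₀, Commute g t := by
    intro g hg
    rw [← frange] at hg
    obtain ⟨x, rfl⟩ := hg
    exact hcft x
  -- t ∉ S₀
  have htS₀ : t ∉ S₀ := by
    intro hmem
    rw [← frange] at hmem
    obtain ⟨x, hx⟩ := hmem
    have ha2 : (π E) ^ 2 ≠ 1 := fun h => by have := hord 2 h; omega
    have hab : π E * π Fm = π Fm * (π E)⁻¹ := by
      conv_lhs => rw [← _root_.one_mul (π E * π Fm), ← hb2]
      rw [pow_two, mul_assoc, ← mul_assoc (π Fm) (π E) (π Fm), hrel]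
    cases x with
    | r i =>
      have hx' : (π E) ^ i.val = t := hx
      have hconjpow : π Fm * (π E) ^ i.val * π Fm = ((π E) ^ i.val)⁻¹ := by
        have h := conj_pow (a := π Fm) (b := π E) (i := i.val)
        rw [hbinv] at h
        calc π Fm * (π E) ^ i.val * π Fm = (π Fm * π E * π Fm) ^ i.val := h.symm
        _ = ((π E)⁻¹) ^ i.val := by rw [hrel]
        _ = ((π E) ^ i.val)⁻¹ := by rw [inv_pow]
      have hct : π Fm * (π E) ^ i.val = (π E) ^ i.val * π Fm := by
        rw [hx']; exact tcommB.eq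
      have heq : (π E) ^ i.val = ((π E) ^ i.val)⁻¹ := by
        rw [← hconjpow]
        calc (π E) ^ i.val = (π E) ^ i.val * (π Fm * π Fm) := by
              rw [← pow_two, hb2, _root_.mul_one]
        _ = ((π E) ^ i.val * π Fm) * π Fm := by group
        _ = (π Fm * (π E) ^ i.val) * π Fm := by rw [← hct]
      have h2k : (π E) ^ (2 * i.val) = 1 := by
        rw [two_mul, pow_add]
        nth_rewrite 2 [heq]
        exact mul_inv_cancel _
      have h9 := hord _ h2k
      have hlt : i.val < 9 := ZMod.val_lt i
      have hv0 : i.val = 0 := by omega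
      apply htne
      rw [← hx', hv0, pow_zero]
    | sr i =>
      have hx' : π Fm * (π E) ^ i.val = t := hx
      have hc := tcommA
      rw [← hx'] at hc
      have h1 : π E * (π Fm * (π E) ^ i.val) = π Fm * (π E) ^ i.val * π E := hc.eq
      have hA : Commute (π E) ((π E) ^ i.val) := (Commute.refl _).pow_right _
      have h2 : (π E)⁻¹ * (π E) ^ i.val = (π E) ^ i.val * π E := by
        apply mul_left_cancel (a := π Fm)
        calc π Fm * ((π E)⁻¹ * (π E) ^ i.val)
            = (π Fm * (π E)⁻¹) * (π E) ^ i.val := by group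
        _ = (π E * π Fm) * (π E) ^ i.val := by rw [← hab]
        _ = π E * (π Fm * (π E) ^ i.val) := by group
        _ = π Fm * (π E) ^ i.val * π E := h1
        _ = π Fm * ((π E) ^ i.val * π E) := by group
      have h3 : (π E)⁻¹ = π E := by
        apply mul_right_cancel (b := (π E) ^ i.val)
        rw [h2, hA.eq]
      apply ha2
      rw [pow_two]
      nth_rewrite 1 [← h3]
      exact inv_mul_cancel _
  -- t, as well as its powers, relative to S₀ and S
  have hbt : π Fm * t = s ^ 3 := by
    rw [ht, ← mul_assoc, ← _root_.map_mul, hFm2, _root_.map_one, _root_.one_mul]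
  have hS₀leS : S₀ ≤ S := by
    rw [hS₀, hS]
    apply Subgroup.closure_mono
    intro x hx
    rcases hx with h | h
    · exact Or.inl h
    · exact Or.inr (Or.inl h)
  have htmemS : t ∈ S := by
    rw [ht, hS]
    exact mul_mem
      (Subgroup.subset_closure (Or.inr (Or.inl rfl)))
      (Subgroup.subset_closure (Or.inr (Or.inr rfl)))
  -- S = S₀ ⊔ ⟨t⟩
  have hsup : S = S₀ ⊔ Subgroup.closure {t} := by
    apply le_antisymm
    · rw [hS, Subgroup.closure_le]
      rintro x hx
      rcases hx with h | h | h
      · exact Subgroup.mem_sup_left (by rw [hS₀]; exact Subgroup.subset_closure (Or.inl h))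
      · exact Subgroup.mem_sup_left (by rw [hS₀]; exact Subgroup.subset_closure (Or.inr h))
      · rw [Set.mem_singleton_iff] at h
        rw [h, ← hbt]
        exact mul_mem
          (Subgroup.mem_sup_left (by rw [hS₀]; exact Subgroup.subset_closure (Or.inr rfl)))
          (Subgroup.mem_sup_right (Subgroup.subset_closure rfl))
    · apply sup_le
      · exact hS₀leS
      · rw [Subgroup.closure_le]
        intro x hx
        rw [Set.mem_singleton_iff] at hx
        rw [hx]
        exact htmemS
  -- S₀ ⊓ ⟨t⟩ = ⊥
  have hto : ∀ n : ℤ, t ^ n = 1 ∨ t ^ n = t := by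
    intro n
    have ht2z : t ^ (2:ℤ) = 1 := by
      rw [show ((2:ℤ)) = ((2:ℕ):ℤ) from rfl, zpow_natCast, ht2]
    rcases Int.even_or_odd n with ⟨k, hk⟩ | ⟨k, hk⟩
    · left
      rw [hk, show k + k = 2 * k from by ring, _root_.zpow_mul, ht2z, _root_.one_zpow]
    · right
      rw [hk, _root_.zpow_add, _root_.zpow_mul, ht2z, _root_.one_zpow, _root_.zpow_one, _root_.one_mul]
  have hinf : S₀ ⊓ Subgroup.closure {t} = ⊥ := by
    rw [eq_bot_iff]
    rintro g ⟨hg0, hgt⟩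
    obtain ⟨n, hn⟩ := Subgroup.mem_closure_singleton.mp hgt
    rcases hto n with h | h
    · rw [← hn, h]
      exact Subgroup.one_mem ⊥
    · exfalso
      apply htS₀
      rw [← hn, h] at hg0
      exact hg0
  -- the isomorphism for S₀
  have e0 : ↥S₀ ≃* DihedralGroup 9 :=
    (MulEquiv.subgroupCongr frange.symm).trans (MonoidHom.ofInjective finj).symm
  -- the big homomorphism
  have htval : ∀ y1 y2 : Multiplicative (ZMod 2),
      t ^ (Multiplicative.toAdd (y1 * y2)).val
        = t ^ (Multiplicative.toAdd y1).val * t ^ (Multiplicative.toAdd y2).val := by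
    intro y1 y2
    rw [← pow_add]
    apply pow_congr_mod ht2
    simp only [Nat.cast_add, val_cast_zmod]
    rfl
  set bigF : DihedralGroup 9 × Multiplicative (ZMod 2) →* Γ :=
    { toFun := fun p => f p.1 * t ^ (Multiplicative.toAdd p.2).val,
      map_one' := by
        show f 1 * t ^ (Multiplicative.toAdd (1 : Multiplicative (ZMod 2))).val = 1
        rw [_root_.map_one, _root_.one_mul]
        norm_num [ZMod.val_zero]
      map_mul' := by
        rintro ⟨x1, y1⟩ ⟨x2, y2⟩
        show f (x1 * x2) * t ^ (Multiplicative.toAdd (y1 * y2)).val = _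
        rw [_root_.map_mul, htval]
        have hcomm : Commute (f x2) (t ^ (Multiplicative.toAdd y1).val) :=
          (hcft x2).pow_right _
        calc f x1 * f x2 * (t ^ (Multiplicative.toAdd y1).val
              * t ^ (Multiplicative.toAdd y2).val)
            = f x1 * (f x2 * t ^ (Multiplicative.toAdd y1).val)
              * t ^ (Multiplicative.toAdd y2).val := by group
        _ = f x1 * (t ^ (Multiplicative.toAdd y1).val * f x2)
              * t ^ (Multiplicative.toAdd y2).val := by rw [hcomm.eq]
        _ = _ := by group } with hbigF
  have hbigFval : ∀ p : DihedralGroup 9 × Multiplicative (ZMod 2),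
      bigF p = f p.1 * t ^ (Multiplicative.toAdd p.2).val := fun _ => rfl
  have biginj : Function.Injective bigF := by
    apply (injective_iff_map_eq_one _).mpr
    rintro ⟨x, y⟩ hxy
    rw [hbigFval] at hxy
    have hlt : (Multiplicative.toAdd y).val < 2 := ZMod.val_lt _
    have hy0 : (Multiplicative.toAdd y).val = 0 → y = 1 := by
      intro h
      have h' : Multiplicative.toAdd y = 0 := by rwa [← ZMod.val_eq_zero]
      have := congrArg Multiplicative.ofAdd h'
      simpa using this
    interval_cases h : (Multiplicative.toAdd y).val
    · rw [pow_zero, _root_.mul_one] at hxy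
      have hx1 : x = 1 := finj (by rw [hxy, _root_.map_one])
      rw [hx1, hy0 rfl]
      rfl
    · exfalso
      rw [pow_one] at hxy
      apply htS₀
      have hfx : f x = t⁻¹ := eq_inv_of_mul_eq_one_left hxy
      have hti : t = (f x)⁻¹ := by rw [hfx, inv_inv]
      rw [hti, ← _root_.map_inv, ← frange]
      exact ⟨x⁻¹, rfl⟩
  have bigrange : bigF.range = S := by
    apply le_antisymm
    · rintro _ ⟨⟨x, y⟩, rfl⟩
      rw [hbigFval]
      apply mul_mem
      · apply hS₀leS
        rw [← frange]
        exact ⟨x, rfl⟩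
      · exact pow_mem htmemS _
    · rw [hS, Subgroup.closure_le]
      rintro g hg
      rcases hg with h | h | h
      · refine ⟨(DihedralGroup.r 1, 1), ?_⟩
        rw [hbigFval]
        show f (DihedralGroup.r 1) * t ^ (Multiplicative.toAdd (1 : Multiplicative (ZMod 2))).val = g
        rw [show (Multiplicative.toAdd (1 : Multiplicative (ZMod 2))).val = 0 from rfl,
          pow_zero, _root_.mul_one]
        show (π E) ^ (1 : ZMod 9).val = g
        rw [show ((1 : ZMod 9).val) = 1 from rfl, pow_one, h]
      · refine ⟨(DihedralGroup.sr 0, 1), ?_⟩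
        rw [hbigFval]
        show f (DihedralGroup.sr 0) * t ^ (Multiplicative.toAdd (1 : Multiplicative (ZMod 2))).val = g
        rw [show (Multiplicative.toAdd (1 : Multiplicative (ZMod 2))).val = 0 from rfl,
          pow_zero, _root_.mul_one]
        show π Fm * (π E) ^ (0 : ZMod 9).val = g
        rw [show ((0 : ZMod 9).val) = 0 from rfl, pow_zero, _root_.mul_one, h]
      · rw [Set.mem_singleton_iff] at h
        refine ⟨(DihedralGroup.sr 0, Multiplicative.ofAdd 1), ?_⟩
        rw [hbigFval]
        show f (DihedralGroup.sr 0)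
          * t ^ (Multiplicative.toAdd (Multiplicative.ofAdd (1 : ZMod 2))).val = g
        rw [show (Multiplicative.toAdd (Multiplicative.ofAdd (1 : ZMod 2))).val = 1 from rfl,
          pow_one]
        show (π Fm * (π E) ^ (0 : ZMod 9).val) * t = g
        rw [show ((0 : ZMod 9).val) = 0 from rfl, pow_zero, _root_.mul_one, hbt, h]
  have e1 : ↥S ≃* DihedralGroup 9 × Multiplicative (ZMod 2) :=
    (MulEquiv.subgroupCongr bigrange.symm).trans (MonoidHom.ofInjective biginj).symm
  exact ⟨⟨ht2, htne⟩, hS₀comm, hsup, hinf, ⟨e0⟩, ⟨e1⟩⟩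
end

section
/- The element \overline{Fσ^3} of PΓU_3(8) is an involution that inverts Ā and C̄ and centralizes B̄, Ē and F̄; consequently ⟨Ā, B̄, C̄, Ē, F̄, \overline{Fσ^3}⟩ normalizes Q_2 = ⟨Ā, B̄, C̄⟩ and the quotient ⟨Ē, F̄, \overline{Fσ^3}⟩·Q_2/Q_2 is isomorphic to Sym(3) × C_2. -/
open Matrix

section AuxAbstract


namespace Stmt18Aux

abbrev G12 := Equiv.Perm (Fin 3) × Multiplicative (ZMod 2)

def c3 : Equiv.Perm (Fin 3) := finRotate 3

def ii (p : Equiv.Perm (Fin 3)) : ℕ := (p 0).val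
def jj (p : Equiv.Perm (Fin 3)) : ℕ := if p 1 = p 0 + 1 then 0 else 1
def kk (u : Multiplicative (ZMod 2)) : ℕ := (Multiplicative.toAdd u).val

lemma W1 : ∀ p q : Equiv.Perm (Fin 3), ii (p*q) % 3 = (ii p + (ii q + (jj p % 2) * ii q)) % 3 := by decide
lemma W2 : ∀ p q : Equiv.Perm (Fin 3), jj (p*q) % 2 = (jj p + jj q) % 2 := by decide
lemma W3 : ∀ u v : Multiplicative (ZMod 2), kk (u*v) % 2 = (kk u + kk v) % 2 := by decide

section
variable {G : Type*} [Group G]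

lemma pow_mod (x : G) (d : ℕ) (hx : x ^ d = 1) (n : ℕ) : x ^ n = x ^ (n % d) := by
  conv_lhs => rw [← Nat.div_add_mod n d]
  rw [pow_add, pow_mul, hx, one_pow, one_mul]

private lemma swap2 (x y y' z : G) (h : x * y = y' * x) : x * (y * z) = y' * (x * z) := by
  rw [← mul_assoc, h, mul_assoc]

private lemma hpow (x : G) (m n : ℕ) (z : G) : x^m * (x^n * z) = x^(m+n) * z := by
  rw [← mul_assoc, ← pow_add]

lemma exists_psi (e f τ : G) (he : e ^ 3 = 1) (hf : f ^ 2 = 1) (hτ : τ ^ 2 = 1)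
    (hfe : f * e * f = e * e) (hτe : τ * e = e * τ) (hτf : τ * f = f * τ) :
    ∃ ψ : G12 →* G,
      ψ (c3, 1) = e ∧ ψ (Equiv.swap 1 2, 1) = f ∧ ψ (1, Multiplicative.ofAdd 1) = τ ∧
      ∀ x : G12, ψ x = e ^ ii x.1 * f ^ jj x.1 * τ ^ kk x.2 := by
  have hff : f * f = 1 := by rw [← pow_two]; exact hf
  have hfem : ∀ m : ℕ, f * e ^ m * f = e ^ (2 * m) := by
    intro m
    induction m with
    | zero => simpa using hff
    | succ n ih =>
      have h1 : (f * e ^ n * f) * (f * e * f) = f * e ^ (n+1) * f := by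
        have h2 : (f * e ^ n * f) * (f * e * f) = f * e ^ n * (f * f) * (e * f) := by group
        rw [h2, hff, mul_one, pow_succ]; group
      rw [← h1, ih, hfe, ← pow_two, ← pow_add]
      congr 1
  have hcomm : ∀ (a' b : ℕ), f^b * e^a' = e^(a' + (b % 2) * a') * f^b := by
    intro a' b
    rw [pow_mod f 2 hf b]
    rcases Nat.mod_two_eq_zero_or_one b with h | h <;> rw [h]
    · simp
    · have h3 : f * e ^ a' * f * f = e^(2*a') * f := by rw [hfem]
      rw [mul_assoc, hff, mul_one] at h3
      simpa [pow_one, two_mul] using h3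
  have cτe : Commute τ e := hτe
  have cτf : Commute τ f := hτf
  have mul_nf : ∀ a b c a' b' c' : ℕ,
      (e^a * f^b * τ^c) * (e^a' * f^b' * τ^c')
        = e^(a + (a' + (b%2) * a')) * f^(b+b') * τ^(c+c') := by
    intro a b c a' b' c'
    simp only [mul_assoc]
    rw [swap2 (τ^c) (e^a') (e^a') _ ((cτe.pow_pow c a').eq),
        swap2 (τ^c) (f^b') (f^b') _ ((cτf.pow_pow c b').eq),
        ← pow_add τ c c',
        swap2 (f^b) (e^a') (e^(a' + (b%2) * a')) _ (hcomm a' b),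
        hpow f b b', hpow e a _]
  let ψfun : G12 → G := fun x => e ^ ii x.1 * f ^ jj x.1 * τ ^ kk x.2
  have hmul : ∀ x y : G12, ψfun (x * y) = ψfun x * ψfun y := by
    rintro ⟨p, u⟩ ⟨q, v⟩
    show e ^ ii (p*q) * f ^ jj (p*q) * τ ^ kk (u*v) = _
    rw [mul_nf]
    rw [pow_mod e 3 he (ii (p*q)), pow_mod e 3 he (ii p + (ii q + jj p % 2 * ii q)),
        ← W1 p q,
        pow_mod f 2 hf (jj (p*q)), pow_mod f 2 hf (jj p + jj q), ← W2 p q,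
        pow_mod τ 2 hτ (kk (u*v)), pow_mod τ 2 hτ (kk u + kk v), ← W3 u v]
  refine ⟨MonoidHom.mk' ψfun hmul, ?_, ?_, ?_, fun x => rfl⟩
  · show e ^ ii c3 * f ^ jj c3 * τ ^ kk 1 = e
    have h := (by decide : ii c3 = 1 ∧ jj c3 = 0 ∧ kk (1 : Multiplicative (ZMod 2)) = 0)
    rw [h.1, h.2.1, h.2.2]; simp
  · show e ^ ii (Equiv.swap 1 2) * f ^ jj (Equiv.swap 1 2) * τ ^ kk 1 = f
    have h := (by decide : ii (Equiv.swap 1 2 : Equiv.Perm (Fin 3)) = 0 ∧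
      jj (Equiv.swap 1 2 : Equiv.Perm (Fin 3)) = 1 ∧ kk (1 : Multiplicative (ZMod 2)) = 0)
    rw [h.1, h.2.1, h.2.2]; simp
  · show e ^ ii 1 * f ^ jj 1 * τ ^ kk (Multiplicative.ofAdd 1) = τ
    have h := (by decide : ii (1 : Equiv.Perm (Fin 3)) = 0 ∧ jj (1 : Equiv.Perm (Fin 3)) = 0 ∧
      kk (Multiplicative.ofAdd (1 : ZMod 2)) = 1)
    rw [h.1, h.2.1, h.2.2]; simp

end
end Stmt18Aux

namespace Stmt18Aux
section
variable {G : Type*} [Group G]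

lemma class12 : ∀ g : G12, g ≠ 1 →
    g = (c3,1) ∨ g = (c3*c3,1) ∨ g = (1, Multiplicative.ofAdd 1) ∨
    g*g = (c3,1) ∨ g*g = (c3*c3,1) ∨
    g * ((c3,1) * g * (c3,1)⁻¹) = (c3,1) ∨ g * ((c3,1) * g * (c3,1)⁻¹) = (c3*c3,1) := by decide

lemma exists_bij (e f τ : G) (he : e ^ 3 = 1) (hf : f ^ 2 = 1) (hτ : τ ^ 2 = 1)
    (hfe : f * e * f = e * e) (hτe : τ * e = e * τ) (hτf : τ * f = f * τ)
    (hgen : Subgroup.closure ({e, f, τ} : Set G) = ⊤) (hne : e ≠ 1) (hnτ : τ ≠ 1) :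
    ∃ ψ : G12 →* G, Function.Bijective ψ := by
  obtain ⟨ψ, h1, h2, h3, -⟩ := exists_psi e f τ he hf hτ hfe hτe hτf
  have he1 : ∀ x : G, x ^ 3 = 1 → x * x = 1 → x = 1 := by
    intro x h3' h2'
    have hx : x ^ 3 = x * x * x := by rw [pow_succ, pow_two]
    rw [h2', one_mul, h3'] at hx; exact hx.symm
  have hker1 : (c3, (1 : Multiplicative (ZMod 2))) ∈ ψ.ker → False := by
    intro hk
    exact hne (by rwa [MonoidHom.mem_ker, h1] at hk)
  have hker2 : ((c3*c3 : Equiv.Perm (Fin 3)), (1 : Multiplicative (ZMod 2))) ∈ ψ.ker → False := by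
    intro hk
    rw [MonoidHom.mem_ker] at hk
    have hprod : ((c3*c3 : Equiv.Perm (Fin 3)), (1 : Multiplicative (ZMod 2)))
        = (c3, (1 : Multiplicative (ZMod 2))) * (c3, 1) := by decide
    rw [hprod, _root_.map_mul, h1] at hk
    exact hne (he1 e he hk)
  refine ⟨ψ, ?_, ?_⟩
  · rw [← MonoidHom.ker_eq_bot_iff]
    by_contra hne'
    obtain ⟨g, hg, hgne⟩ : ∃ g ∈ ψ.ker, g ≠ 1 := by
      by_contra hc
      push_neg at hc
      exact hne' ((Subgroup.eq_bot_iff_forall _).2 hc)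
    rcases class12 g hgne with h | h | h | h | h | h | h
    · exact (hker1 (h ▸ hg)).elim
    · exact (hker2 (h ▸ hg)).elim
    · exact (hnτ (by rw [h] at hg; rwa [MonoidHom.mem_ker, h3] at hg)).elim
    · exact (hker1 (h ▸ mul_mem hg hg)).elim
    · exact (hker2 (h ▸ mul_mem hg hg)).elim
    · exact (hker1 (h ▸ mul_mem hg (ψ.normal_ker.conj_mem g hg _))).elim
    · exact (hker2 (h ▸ mul_mem hg (ψ.normal_ker.conj_mem g hg _))).elim
  · rw [← MonoidHom.range_eq_top, eq_top_iff, ← hgen, Subgroup.closure_le]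
    rintro x (rfl | rfl | rfl)
    · exact ⟨(c3, 1), h1⟩
    · exact ⟨(Equiv.swap 1 2, 1), h2⟩
    · exact ⟨(1, Multiplicative.ofAdd 1), h3⟩

lemma class12' : True := trivial
end
end Stmt18Aux

end AuxAbstract

namespace Stmt18Aux
set_option linter.unusedSectionVars false


variable {F : Type*} [Field F]

/-- matrix of an `SU3` element -/
def mat (M : ↥(SU3 F)) : Matrix (Fin 3) (Fin 3) F :=
  ((M : GL (Fin 3) F) : Matrix (Fin 3) (Fin 3) F)

lemma mat_mul (M N : ↥(SU3 F)) : mat (M * N) = mat M * mat N := rfl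

lemma mat_one : mat (1 : ↥(SU3 F)) = 1 := rfl

lemma eq_of_mat {X Y : ↥(SU3 F)} (h : mat X = mat Y) : X = Y :=
  Subtype.ext (Units.ext h)

lemma mat_inv_eq (M : ↥(SU3 F)) (X Y : Matrix (Fin 3) (Fin 3) F) (h : mat M = X)
    (h2 : Y * X = 1) : mat M⁻¹ = Y := by
  have hm : mat M * mat M⁻¹ = 1 := by
    rw [← mat_mul, mul_inv_cancel, mat_one]
  calc mat M⁻¹ = 1 * mat M⁻¹ := (one_mul _).symm
    _ = Y * (X * mat M⁻¹) := by rw [← mul_assoc, h2]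
    _ = Y * 1 := by rw [← h, hm]
    _ = Y := mul_one _

/-- diagonal matrix of β-powers -/
def dm (β : F) (a b c : ℕ) : Matrix (Fin 3) (Fin 3) F := !![β^a,0,0; 0,β^b,0; 0,0,β^c]

def Am : Matrix (Fin 3) (Fin 3) F := !![0,0,1; 1,0,0; 0,1,0]

def Fmm : Matrix (Fin 3) (Fin 3) F := !![1,0,0; 0,0,1; 0,1,0]

variable {β : F}

lemma dm_mul (a b c a' b' c' : ℕ) :
    dm β a b c * dm β a' b' c' = dm β (a+a') (b+b') (c+c') := by
  simp [dm, Matrix.mul_fin_three, pow_add]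

lemma Am_dm (a b c : ℕ) : (Am : Matrix (Fin 3) (Fin 3) F) * dm β a b c = dm β c a b * Am := by
  simp [Am, dm, Matrix.mul_fin_three]

lemma Am3 : (Am : Matrix (Fin 3) (Fin 3) F) * (Am * Am) = 1 := by
  simp [Am, Matrix.mul_fin_three, Matrix.one_fin_three]

-- reassociated versions for simp normalisation
lemma dm_mul' (a b c a' b' c' : ℕ) (X : Matrix (Fin 3) (Fin 3) F) :
    dm β a b c * (dm β a' b' c' * X) = dm β (a+a') (b+b') (c+c') * X := by
  rw [← mul_assoc, dm_mul]

lemma Am_dm' (a b c : ℕ) (X : Matrix (Fin 3) (Fin 3) F) :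
    (Am : Matrix (Fin 3) (Fin 3) F) * (dm β a b c * X) = dm β c a b * (Am * X) := by
  rw [← mul_assoc, Am_dm, mul_assoc]

lemma Am3' (X : Matrix (Fin 3) (Fin 3) F) :
    (Am : Matrix (Fin 3) (Fin 3) F) * (Am * (Am * X)) = X := by
  have h : (Am : Matrix (Fin 3) (Fin 3) F) * Am * Am = 1 := by rw [mul_assoc]; exact Am3
  rw [← mul_assoc, ← mul_assoc, h, one_mul]

lemma pow_mod' {M : Type*} [Monoid M] (x : M) (d : ℕ) (hx : x ^ d = 1) (n : ℕ) :
    x ^ n = x ^ (n % d) := by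
  conv_lhs => rw [← Nat.div_add_mod n d]
  rw [pow_add, pow_mul, hx, one_pow, one_mul]

lemma dm_one9 (hβ9 : β ^ 9 = 1) (x y z : ℕ) (hx : x % 9 = 0) (hy : y % 9 = 0)
    (hz : z % 9 = 0) : dm β x y z = 1 := by
  rw [dm, pow_mod' β 9 hβ9 x, pow_mod' β 9 hβ9 y, pow_mod' β 9 hβ9 z, hx, hy, hz]
  simp [Matrix.one_fin_three]

lemma dm_congr (hβ9 : β ^ 9 = 1) (x y z x' y' z' : ℕ) (hx : x % 9 = x' % 9)
    (hy : y % 9 = y' % 9) (hz : z % 9 = z' % 9) : dm β x y z = dm β x' y' z' := by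
  rw [dm, dm, pow_mod' β 9 hβ9 x, pow_mod' β 9 hβ9 y, pow_mod' β 9 hβ9 z, hx, hy, hz,
    ← pow_mod' β 9 hβ9 x', ← pow_mod' β 9 hβ9 y', ← pow_mod' β 9 hβ9 z']

lemma map_three (f : F → F) (a b c d e g h i j : F) :
    Matrix.map !![a,b,c;d,e,g;h,i,j] f = !![f a, f b, f c; f d, f e, f g; f h, f i, f j] := by
  ext i' j'
  fin_cases i' <;> fin_cases j' <;> simp [Matrix.map_apply]


variable {F : Type*} [Field F] {β : F}

def Wpred (β : F) (M : ↥(SU3 F)) : Prop :=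
  ∃ a b c : ℕ, a % 3 = b % 3 ∧ b % 3 = c % 3 ∧
    (mat M = dm β a b c ∨ mat M = dm β a b c * Am ∨ mat M = dm β a b c * (Am * Am))

lemma dm000 : dm β 0 0 0 = 1 := by simp [dm, Matrix.one_fin_three]

lemma Wpred_one : Wpred β (1 : ↥(SU3 F)) :=
  ⟨0, 0, 0, rfl, rfl, Or.inl (by rw [mat_one, dm000])⟩

lemma Wpred_mul {M N : ↥(SU3 F)} (hM : Wpred β M) (hN : Wpred β N) : Wpred β (M * N) := by
  obtain ⟨a, b, c, h1, h2, hm⟩ := hM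
  obtain ⟨a', b', c', h1', h2', hn⟩ := hN
  have key : mat (M * N) = mat M * mat N := mat_mul M N
  rcases hm with hm | hm | hm <;> rcases hn with hn | hn | hn
  · exact ⟨a+a', b+b', c+c', by omega, by omega, Or.inl (by
      rw [key, hm, hn, dm_mul])⟩
  · exact ⟨a+a', b+b', c+c', by omega, by omega, Or.inr (Or.inl (by
      rw [key, hm, hn, ← mul_assoc, dm_mul]))⟩
  · exact ⟨a+a', b+b', c+c', by omega, by omega, Or.inr (Or.inr (by
      rw [key, hm, hn, ← mul_assoc, dm_mul]))⟩
  · exact ⟨a+c', b+a', c+b', by omega, by omega, Or.inr (Or.inl (by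
      rw [key, hm, hn, mul_assoc, Am_dm, ← mul_assoc, dm_mul]))⟩
  · exact ⟨a+c', b+a', c+b', by omega, by omega, Or.inr (Or.inr (by
      rw [key, hm, hn]
      simp only [mul_assoc, Am_dm', Am_dm, dm_mul', dm_mul]))⟩
  · exact ⟨a+c', b+a', c+b', by omega, by omega, Or.inl (by
      rw [key, hm, hn]
      simp only [mul_assoc, Am_dm', Am_dm, dm_mul', dm_mul, Am3', Am3, mul_one])⟩
  · exact ⟨a+b', b+c', c+a', by omega, by omega, Or.inr (Or.inr (by
      rw [key, hm, hn]
      simp only [mul_assoc, Am_dm', Am_dm, dm_mul', dm_mul]))⟩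
  · exact ⟨a+b', b+c', c+a', by omega, by omega, Or.inl (by
      rw [key, hm, hn]
      simp only [mul_assoc, Am_dm', Am_dm, dm_mul', dm_mul, Am3', Am3, mul_one])⟩
  · exact ⟨a+b', b+c', c+a', by omega, by omega, Or.inr (Or.inl (by
      rw [key, hm, hn]
      simp only [mul_assoc, Am_dm', Am_dm, dm_mul', dm_mul, Am3', Am3, mul_one]))⟩

lemma Wpred_inv (hβ9 : β ^ 9 = 1) {M : ↥(SU3 F)} (hM : Wpred β M) : Wpred β M⁻¹ := by
  obtain ⟨a, b, c, h1, h2, hm | hm | hm⟩ := hM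
  · refine ⟨8*a, 8*b, 8*c, by omega, by omega, Or.inl ?_⟩
    refine mat_inv_eq M _ _ hm ?_
    rw [dm_mul]
    exact dm_one9 hβ9 _ _ _ (by omega) (by omega) (by omega)
  · refine ⟨8*b, 8*c, 8*a, by omega, by omega, Or.inr (Or.inr ?_)⟩
    refine mat_inv_eq M _ _ hm ?_
    simp only [mul_assoc, Am_dm', Am_dm, dm_mul', dm_mul, Am3', Am3, mul_one]
    exact dm_one9 hβ9 _ _ _ (by omega) (by omega) (by omega)
  · refine ⟨8*c, 8*a, 8*b, by omega, by omega, Or.inr (Or.inl ?_)⟩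
    refine mat_inv_eq M _ _ hm ?_
    simp only [mul_assoc, Am_dm', Am_dm, dm_mul', dm_mul, Am3', Am3, mul_one]
    exact dm_one9 hβ9 _ _ _ (by omega) (by omega) (by omega)

lemma center_scalar (e1 e2 : F) (h1 : e1 ≠ 1) (h2 : e2 ≠ 1) (h12 : e1 ≠ e2)
    (Eel Ael Z : ↥(SU3 F))
    (hE : mat Eel = !![1,0,0; 0,e1,0; 0,0,e2])
    (hA : mat Ael = Am)
    (hZ : Z ∈ Subgroup.center ↥(SU3 F)) :
    ∃ l : F, mat Z = !![l,0,0; 0,l,0; 0,0,l] := by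
  have hfac : ∀ z u v : F, u ≠ v → z * u = z * v → z = 0 := by
    intro z u v huv h
    by_contra hz
    exact huv (mul_left_cancel₀ hz h)
  have hcE := congrArg mat ((Subgroup.mem_center_iff.mp hZ) Eel)
  rw [mat_mul, mat_mul] at hcE
  have hcA := congrArg mat ((Subgroup.mem_center_iff.mp hZ) Ael)
  rw [mat_mul, mat_mul] at hcA
  rw [← Matrix.ext_iff] at hcE hcA
  have q01 := hcE 0 1; have q02 := hcE 0 2; have q10 := hcE 1 0
  have q12 := hcE 1 2; have q20 := hcE 2 0; have q21 := hcE 2 1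
  simp [hE, Matrix.mul_apply, Fin.sum_univ_three, Matrix.vecHead, Matrix.vecTail] at q01 q02 q10 q12 q20 q21
  have r02 := hcA 0 2; have r10 := hcA 1 0
  simp [hA, Am, Matrix.mul_apply, Fin.sum_univ_three, Matrix.vecHead, Matrix.vecTail] at r02 r10
  have h01 : mat Z 0 1 = 0 := hfac _ 1 e1 (Ne.symm h1) (by rw [mul_one]; exact q01)
  have h02 : mat Z 0 2 = 0 := hfac _ 1 e2 (Ne.symm h2) (by rw [mul_one]; exact q02)
  have h10 : mat Z 1 0 = 0 := hfac _ e1 1 h1 (by rw [mul_one, mul_comm]; exact q10)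
  have h12' : mat Z 1 2 = 0 := hfac _ e1 e2 h12 (by rw [mul_comm]; exact q12)
  have h20 : mat Z 2 0 = 0 := hfac _ e2 1 h2 (by rw [mul_one, mul_comm]; exact q20)
  have h21 : mat Z 2 1 = 0 := hfac _ e2 e1 (Ne.symm h12) (by rw [mul_comm]; exact q21)
  refine ⟨mat Z 0 0, ?_⟩
  rw [← Matrix.ext_iff]
  intro i j
  fin_cases i <;> fin_cases j <;>
    simp [h01, h02, h10, h12', h20, h21, ← r10, r02, Matrix.vecHead, Matrix.vecTail]


end Stmt18Aux

open Stmt18Aux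


set_option maxHeartbeats 1600000 in
/-- in PΓU₃(8) (axiomatized as in statement 11), the element
t = F̄σ³ is an involution inverting Ā and C̄ and centralizing B̄, Ē and F̄;
consequently ⟨Ā,B̄,C̄,Ē,F̄,t⟩ normalizes Q₂ = ⟨Ā,B̄,C̄⟩, and the quotient of
N = ⟨Ē,F̄,t⟩·Q₂ by Q₂ is isomorphic to Sym(3) × C₂ (expressed via a
surjective homomorphism with kernel Q₂ ∩ N). -/
theorem stmt_18 (F : Type*) [Field F] [Fintype F] (hF : Fintype.card F = 64)
    (ζ : Fˣ) (hζ : ∀ x : Fˣ, x ∈ Subgroup.zpowers ζ)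
    (β α : F) (hβ : β = (ζ : F) ^ 7) (hα : α = β ^ 3)
    (Γ : Type*) [Group Γ] (π : ↥(SU3 F) →* Γ)
    (hker : π.ker = Subgroup.center ↥(SU3 F))
    (s : Γ) (hs : orderOf s = 6)
    (hconj : ∀ M M' : ↥(SU3 F),
      ((M' : GL (Fin 3) F) : Matrix (Fin 3) (Fin 3) F) =
        ((M : GL (Fin 3) F) : Matrix (Fin 3) (Fin 3) F).map (fun x => x ^ 2) →
      s * π M * s⁻¹ = π M')
    (hgen : Subgroup.closure (Set.range π ∪ {s}) = ⊤)
    (A B C E Fm : ↥(SU3 F))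
    (hA : ((A : GL (Fin 3) F) : Matrix (Fin 3) (Fin 3) F) = !![0,0,1; 1,0,0; 0,1,0])
    (hB : ((B : GL (Fin 3) F) : Matrix (Fin 3) (Fin 3) F) = !![1,0,0; 0,α,0; 0,0,α⁻¹])
    (hC : ((C : GL (Fin 3) F) : Matrix (Fin 3) (Fin 3) F) = !![β,0,0; 0,β^4,0; 0,0,β^4])
    (hE : ((E : GL (Fin 3) F) : Matrix (Fin 3) (Fin 3) F) = !![1,0,0; 0,β,0; 0,0,β⁻¹])
    (hFm : ((Fm : GL (Fin 3) F) : Matrix (Fin 3) (Fin 3) F) = !![1,0,0; 0,0,1; 0,1,0]) :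
    ∀ t : Γ, t = π Fm * s ^ 3 →
    ∀ Q₂ H N : Subgroup Γ,
      Q₂ = Subgroup.closure {π A, π B, π C} →
      H = Subgroup.closure {π A, π B, π C, π E, π Fm, t} →
      N = Subgroup.closure {π E, π Fm, t} ⊔ Q₂ →
      (t ^ 2 = 1 ∧ t ≠ 1) ∧
      (t * π A * t⁻¹ = (π A)⁻¹ ∧ t * π C * t⁻¹ = (π C)⁻¹) ∧
      (Commute t (π B) ∧ Commute t (π E) ∧ Commute t (π Fm)) ∧
      (∀ g ∈ H, ∀ q ∈ Q₂, g * q * g⁻¹ ∈ Q₂) ∧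
      ∃ φ : ↥N →* Equiv.Perm (Fin 3) × Multiplicative (ZMod 2),
        Function.Surjective φ ∧ φ.ker = Q₂.subgroupOf N := by
  
  intro t ht Q₂ H N hQ hH hN
  subst ht hQ hH hN
  haveI : DecidableEq F := Classical.decEq F
  ---------------------------------------------------------------- field facts
  have hcardu : Fintype.card Fˣ = 63 := by rw [Fintype.card_units, hF]
  have hordζ : orderOf ζ = 63 := by
    rw [orderOf_eq_card_of_forall_mem_zpowers hζ, Nat.card_eq_fintype_card, hcardu]
  have hordβu : orderOf (ζ ^ 7) = 9 := by
    rw [orderOf_pow, hordζ]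
    norm_num
  have hβu : β = ((ζ ^ 7 : Fˣ) : F) := by
    rw [hβ]
    exact (Units.val_pow_eq_pow_val _ _).symm
  have hcoe : ∀ k : ℕ, β ^ k = (((ζ ^ 7) ^ k : Fˣ) : F) := fun k => by
    rw [hβu]
    exact (Units.val_pow_eq_pow_val _ _).symm
  have hβ9 : β ^ 9 = 1 := by
    have h1 : (ζ ^ 7) ^ 9 = 1 := hordβu ▸ pow_orderOf_eq_one (ζ ^ 7)
    rw [hcoe 9, h1, Units.val_one]
  have hβinj : ∀ m n : ℕ, β ^ m = β ^ n ↔ m % 9 = n % 9 := by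
    intro m n
    constructor
    · intro h
      have hu : (ζ ^ 7) ^ m = (ζ ^ 7) ^ n := Units.ext (by rw [← hcoe m, ← hcoe n]; exact h)
      have := pow_eq_pow_iff_modEq.mp hu
      rwa [hordβu] at this
    · intro h
      rw [pow_mod' β 9 hβ9 m, pow_mod' β 9 hβ9 n, h]
  have hβ0 : β ≠ 0 := by rw [hβu]; exact Units.ne_zero _
  have hβ1 : β ≠ 1 := fun h => by
    have := (hβinj 1 0).mp (by simpa using h); omega
  have hβinv : β⁻¹ = β ^ 8 := by
    refine inv_eq_of_mul_eq_one_right ?_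
    have h1 : β * β ^ 8 = β ^ 9 := by ring
    rw [h1, hβ9]
  have hβi1 : β⁻¹ ≠ 1 := by
    rw [hβinv]
    intro h
    have := (hβinj 8 0).mp (by simpa using h); omega
  have hββi : β ≠ β⁻¹ := by
    rw [hβinv]
    intro h
    have := (hβinj 1 8).mp (by simpa using h); omega
  have hαinv : α⁻¹ = β ^ 6 := by
    rw [hα]
    refine inv_eq_of_mul_eq_one_right ?_
    have h1 : β ^ 3 * β ^ 6 = β ^ 9 := by ring
    rw [h1, hβ9]
  ---------------------------------------------------------------- matrices
  have hAm : mat A = Am := hA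
  have hFmm' : mat Fm = Fmm := hFm
  have hBm : mat B = dm β 0 3 6 := by
    have h0 : mat B = !![1,0,0; 0,α,0; 0,0,α⁻¹] := hB
    rw [h0, hαinv, hα]
    simp [dm]
  have hCm : mat C = dm β 1 4 4 := by
    have h0 : mat C = !![β,0,0; 0,β^4,0; 0,0,β^4] := hC
    rw [h0]
    simp [dm]
  have hEm : mat E = dm β 0 1 8 := by
    have h0 : mat E = !![1,0,0; 0,β,0; 0,0,β⁻¹] := hE
    rw [h0, hβinv]
    simp [dm]
  have hc2 : mat (C*C) = dm β 2 8 8 := by rw [mat_mul, hCm, dm_mul]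
  have hc4 : mat ((C*C)*(C*C)) = dm β 4 16 16 := by rw [mat_mul, hc2, dm_mul]
  have hc8 : mat (((C*C)*(C*C))*((C*C)*(C*C))) = dm β 8 32 32 := by
    rw [mat_mul, hc4, dm_mul]
  have hb2 : mat (B*B) = dm β 0 6 12 := by rw [mat_mul, hBm, dm_mul]
  have he2 : mat (E*E) = dm β 0 2 16 := by rw [mat_mul, hEm, dm_mul]
  have he4 : mat ((E*E)*(E*E)) = dm β 0 4 32 := by rw [mat_mul, he2, dm_mul]
  have he8 : mat (((E*E)*(E*E))*((E*E)*(E*E))) = dm β 0 8 64 := by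
    rw [mat_mul, he4, dm_mul]
  ---------------------------------------------------------------- identities
  have hFm2 : Fm * Fm = 1 := by
    apply eq_of_mat
    rw [mat_mul, hFmm', mat_one]
    simp [Fmm, Matrix.mul_fin_three, Matrix.one_fin_three]
  have hFminv : Fm⁻¹ = Fm := inv_eq_of_mul_eq_one_right hFm2
  have hA3 : A * (A * A) = 1 := by
    apply eq_of_mat
    rw [mat_mul, mat_mul, hAm, mat_one]
    exact Am3
  have hAinv : A⁻¹ = A * A := inv_eq_of_mul_eq_one_right hA3
  have hCc8 : C * (((C*C)*(C*C))*((C*C)*(C*C))) = 1 := by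
    apply eq_of_mat
    rw [mat_mul, hCm, hc8, dm_mul, mat_one]
    exact dm_one9 hβ9 _ _ _ (by norm_num) (by norm_num) (by norm_num)
  have hEe8 : E * (((E*E)*(E*E))*((E*E)*(E*E))) = 1 := by
    apply eq_of_mat
    rw [mat_mul, hEm, he8, dm_mul, mat_one]
    exact dm_one9 hβ9 _ _ _ (by norm_num) (by norm_num) (by norm_num)
  have hE3 : (E*E)*E = B := by
    apply eq_of_mat
    rw [mat_mul, he2, hEm, dm_mul, hBm]
    exact dm_congr hβ9 _ _ _ _ _ _ (by norm_num) (by norm_num) (by norm_num)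
  have hFA : (Fm * A) * Fm = A * A := by
    apply eq_of_mat
    rw [mat_mul, mat_mul, mat_mul, hFmm', hAm]
    simp [Fmm, Am, Matrix.mul_fin_three]
  have Fm_dm : ∀ x y z : ℕ, Fmm * dm β x y z * Fmm = dm β x z y := by
    intro x y z
    simp [Fmm, dm, Matrix.mul_fin_three]
  have hFC : Fm * C = C * Fm := by
    apply eq_of_mat
    rw [mat_mul, mat_mul, hFmm', hCm]
    simp [Fmm, dm, Matrix.mul_fin_three]
  have hFB : (Fm * B) * Fm = B * B := by
    apply eq_of_mat
    rw [mat_mul, mat_mul, hFmm', hBm, Fm_dm, mat_mul, hBm, dm_mul]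
    exact dm_congr hβ9 _ _ _ _ _ _ (by norm_num) (by norm_num) (by norm_num)
  have hFb2 : (Fm * (B*B)) * Fm = B := by
    apply eq_of_mat
    rw [mat_mul, mat_mul, hFmm', hb2, Fm_dm, hBm]
    exact dm_congr hβ9 _ _ _ _ _ _ (by norm_num) (by norm_num) (by norm_num)
  have hFe8 : (Fm * ((((E*E)*(E*E))*((E*E)*(E*E))))) * Fm = E := by
    apply eq_of_mat
    rw [mat_mul, mat_mul, hFmm', he8, Fm_dm, hEm]
    exact dm_congr hβ9 _ _ _ _ _ _ (by norm_num) (by norm_num) (by norm_num)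
  have hFc8 : Fm * (((C*C)*(C*C))*((C*C)*(C*C))) = (((C*C)*(C*C))*((C*C)*(C*C))) * Fm := by
    have cFC : Commute Fm C := hFC
    exact ((cFC.mul_right cFC).mul_right (cFC.mul_right cFC)).mul_right
      ((cFC.mul_right cFC).mul_right (cFC.mul_right cFC))
  have hEB : E * B = B * E := by
    apply eq_of_mat
    rw [mat_mul, mat_mul, hEm, hBm, dm_mul, dm_mul]
  have hEC : E * C = C * E := by
    apply eq_of_mat
    rw [mat_mul, mat_mul, hEm, hCm, dm_mul, dm_mul]
  have hEA : E * A = C * (B * (B * (A * E))) := by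
    apply eq_of_mat
    simp only [mat_mul, hEm, hAm, hCm, hBm]
    simp only [mul_assoc, Am_dm', Am_dm, dm_mul', dm_mul]
    exact congrArg (fun X => X * Am)
      (dm_congr hβ9 _ _ _ _ _ _ (by norm_num) (by norm_num) (by norm_num))
  have hAE : A * E = E * (A * (A * (C * (C * (A * A))))) := by
    apply eq_of_mat
    simp only [mat_mul, hEm, hAm, hCm]
    simp only [mul_assoc, Am_dm', Am_dm, dm_mul', dm_mul, Am3', Am3, mul_one]
    exact congrArg (fun X => X * Am)
      (dm_congr hβ9 _ _ _ _ _ _ (by norm_num) (by norm_num) (by norm_num))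
  have hFEFB : ((Fm * E) * Fm) * B = E * E := by
    apply eq_of_mat
    rw [mat_mul, mat_mul, mat_mul, hFmm', hEm, hBm, Fm_dm, dm_mul, he2]
    exact dm_congr hβ9 _ _ _ _ _ _ (by norm_num) (by norm_num) (by norm_num)
  ---------------------------------------------------------------- hconj moves
  have condA : mat A = (mat A).map (fun x => x ^ 2) := by
    rw [hAm, Am, map_three]
    norm_num
  have condFm : mat Fm = (mat Fm).map (fun x => x ^ 2) := by
    rw [hFmm', Fmm, map_three]
    norm_num
  have dm_map_sq : ∀ x y z : ℕ,
      (dm β x y z).map (fun v => v ^ 2) = dm β (x*2) (y*2) (z*2) := by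
    intro x y z
    rw [dm, map_three, dm]
    norm_num [← pow_mul]
  have sA : s * π A * s⁻¹ = π A := hconj A A condA
  have sFm : s * π Fm * s⁻¹ = π Fm := hconj Fm Fm condFm
  have sB : s * π B * s⁻¹ = π (B*B) := by
    refine hconj B (B*B) ?_
    show mat (B*B) = (mat B).map (fun x => x ^ 2)
    rw [hb2, hBm, dm_map_sq]
  have sB2 : s * π (B*B) * s⁻¹ = π B := by
    refine hconj (B*B) B ?_
    show mat B = (mat (B*B)).map (fun x => x ^ 2)
    rw [hb2, hBm, dm_map_sq]
    exact dm_congr hβ9 _ _ _ _ _ _ (by norm_num) (by norm_num) (by norm_num)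
  have sC : s * π C * s⁻¹ = π (C*C) := by
    refine hconj C (C*C) ?_
    show mat (C*C) = (mat C).map (fun x => x ^ 2)
    rw [hc2, hCm, dm_map_sq]
  have sC2 : s * π (C*C) * s⁻¹ = π ((C*C)*(C*C)) := by
    refine hconj (C*C) ((C*C)*(C*C)) ?_
    show mat ((C*C)*(C*C)) = (mat (C*C)).map (fun x => x ^ 2)
    rw [hc4, hc2, dm_map_sq]
  have sC4 : s * π ((C*C)*(C*C)) * s⁻¹ = π (((C*C)*(C*C))*((C*C)*(C*C))) := by
    refine hconj _ _ ?_
    show mat (((C*C)*(C*C))*((C*C)*(C*C))) = (mat ((C*C)*(C*C))).map (fun x => x ^ 2)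
    rw [hc8, hc4, dm_map_sq]
  have sE : s * π E * s⁻¹ = π (E*E) := by
    refine hconj E (E*E) ?_
    show mat (E*E) = (mat E).map (fun x => x ^ 2)
    rw [he2, hEm, dm_map_sq]
  have sE2 : s * π (E*E) * s⁻¹ = π ((E*E)*(E*E)) := by
    refine hconj _ _ ?_
    show mat ((E*E)*(E*E)) = (mat (E*E)).map (fun x => x ^ 2)
    rw [he4, he2, dm_map_sq]
  have sE4 : s * π ((E*E)*(E*E)) * s⁻¹ = π (((E*E)*(E*E))*((E*E)*(E*E))) := by
    refine hconj _ _ ?_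
    show mat (((E*E)*(E*E))*((E*E)*(E*E))) = (mat ((E*E)*(E*E))).map (fun x => x ^ 2)
    rw [he8, he4, dm_map_sq]
  have conj3 : ∀ x y z w : Γ, s*x*s⁻¹ = y → s*y*s⁻¹ = z → s*z*s⁻¹ = w →
      s^3 * x * (s^3)⁻¹ = w := by
    intro x y z w h1 h2 h3
    have hp3 : s^3 = s*s*s := by rw [pow_succ, pow_two]
    have h0 : s^3 * x * (s^3)⁻¹ = s*(s*(s*x*s⁻¹)*s⁻¹)*s⁻¹ := by
      rw [hp3, _root_.mul_inv_rev, _root_.mul_inv_rev]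
      group
    rw [h0, h1, h2, h3]
  have s3A : s^3 * π A * (s^3)⁻¹ = π A := conj3 _ _ _ _ sA sA sA
  have s3Fm : s^3 * π Fm * (s^3)⁻¹ = π Fm := conj3 _ _ _ _ sFm sFm sFm
  have s3B : s^3 * π B * (s^3)⁻¹ = π (B*B) := conj3 _ _ _ _ sB sB2 sB
  have s3C : s^3 * π C * (s^3)⁻¹ = π (((C*C)*(C*C))*((C*C)*(C*C))) :=
    conj3 _ _ _ _ sC sC2 sC4
  have s3E : s^3 * π E * (s^3)⁻¹ = π (((E*E)*(E*E))*((E*E)*(E*E))) :=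
    conj3 _ _ _ _ sE sE2 sE4
  ---------------------------------------------------------------- t facts
  set t : Γ := π Fm * s ^ 3 with htdef
  have hcommFs : s^3 * π Fm = π Fm * s^3 := mul_inv_eq_iff_eq_mul.mp s3Fm
  have hs6 : s^3 * s^3 = 1 := by
    have h1 : s^3 * s^3 = s^6 := by group
    rw [h1, ← hs, pow_orderOf_eq_one]
  have t2 : t * t = 1 := by
    calc t * t = π Fm * ((s^3 * π Fm) * s^3) := by rw [htdef]; group
      _ = π Fm * ((π Fm * s^3) * s^3) := by rw [hcommFs]
      _ = (π Fm * π Fm) * (s^3 * s^3) := by group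
      _ = 1 := by rw [hs6, ← _root_.map_mul, hFm2, _root_.map_one, one_mul]
  have ht2 : t ^ 2 = 1 := by rw [pow_two]; exact t2
  have tinv : t⁻¹ = t := inv_eq_of_mul_eq_one_right t2
  have tconj : ∀ x y : Γ, s^3 * x * (s^3)⁻¹ = y →
      t * x * t⁻¹ = π Fm * y * (π Fm)⁻¹ := by
    intro x y h
    have h0 : t * x * t⁻¹ = π Fm * (s^3 * x * (s^3)⁻¹) * (π Fm)⁻¹ := by
      rw [htdef]; group
    rw [h0, h]
  have hπFminv : (π Fm)⁻¹ = π Fm := by rw [← _root_.map_inv, hFminv]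
  have tA : t * π A * t⁻¹ = (π A)⁻¹ := by
    rw [tconj _ _ s3A, hπFminv, ← _root_.map_mul, ← _root_.map_mul, hFA, ← hAinv, _root_.map_inv]
  have tC : t * π C * t⁻¹ = (π C)⁻¹ := by
    have h1 : (π C)⁻¹ = π (((C*C)*(C*C))*((C*C)*(C*C))) := by
      refine inv_eq_of_mul_eq_one_right ?_
      rw [← _root_.map_mul, hCc8, _root_.map_one]
    rw [tconj _ _ s3C, hπFminv, ← _root_.map_mul, ← _root_.map_mul, hFc8, h1]
    rw [_root_.map_mul, _root_.map_mul, mul_assoc, ← _root_.map_mul, hFm2, _root_.map_one, mul_one]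
  have tB : Commute t (π B) := by
    have h1 : t * π B * t⁻¹ = π B := by
      rw [tconj _ _ s3B, hπFminv, ← _root_.map_mul, ← _root_.map_mul, hFb2]
    exact (mul_inv_eq_iff_eq_mul.mp h1)
  have tE : Commute t (π E) := by
    have h1 : t * π E * t⁻¹ = π E := by
      rw [tconj _ _ s3E, hπFminv, ← _root_.map_mul, ← _root_.map_mul, hFe8]
    exact (mul_inv_eq_iff_eq_mul.mp h1)
  have tFm : Commute t (π Fm) := by
    have h1 : t * π Fm * t⁻¹ = π Fm := by
      rw [tconj _ _ s3Fm, hπFminv, mul_assoc, ← _root_.map_mul, hFm2, _root_.map_one, mul_one]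
    exact (mul_inv_eq_iff_eq_mul.mp h1)
  ---------------------------------------------------------------- Q₂ basics
  set Q₂ : Subgroup Γ := Subgroup.closure {π A, π B, π C} with hQdef
  have hAQ : π A ∈ Q₂ := Subgroup.subset_closure (by simp)
  have hBQ : π B ∈ Q₂ := Subgroup.subset_closure (by simp)
  have hCQ : π C ∈ Q₂ := Subgroup.subset_closure (by simp)
  ---------------------------------------------------------------- normalizer
  have conj_of_comm : ∀ (g : Γ) (Y : Γ), g * Y = Y * g →
      (g * Y * g⁻¹ = Y ∧ g⁻¹ * Y * g = Y) := by
    intro g Y h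
    constructor
    · rw [h]; group
    · calc g⁻¹ * Y * g = g⁻¹ * (Y * g) := by group
        _ = g⁻¹ * (g * Y) := by rw [h]
        _ = Y := by group
  have normgen : ∀ g : Γ,
      (∀ x ∈ ({π A, π B, π C} : Set Γ), g * x * g⁻¹ ∈ Q₂ ∧ g⁻¹ * x * g ∈ Q₂) →
      g ∈ Subgroup.normalizer (Q₂ : Set Γ) := by
    intro g hg
    have hdir : ∀ u : Γ, (∀ x ∈ ({π A, π B, π C} : Set Γ), u * x * u⁻¹ ∈ Q₂) →
        ∀ h ∈ Q₂, u * h * u⁻¹ ∈ Q₂ := by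
      intro u hu h hh
      have hle : Q₂ ≤ Subgroup.comap (MulAut.conj u).toMonoidHom Q₂ := by
        rw [hQdef, Subgroup.closure_le]
        intro x hx
        simp only [Subgroup.coe_comap, Set.mem_preimage, SetLike.mem_coe,
          MulAut.conj_apply, MulEquiv.coe_toMonoidHom]
        exact hu x hx
      have := hle hh
      simpa only [Subgroup.mem_comap, MulAut.conj_apply, MulEquiv.coe_toMonoidHom] using this
    rw [Subgroup.mem_normalizer_iff]
    intro h
    constructor
    · intro hh
      exact hdir g (fun x hx => (hg x hx).1) h hh
    · intro hh
      have h2 := hdir g⁻¹ (fun x hx => by simpa using (hg x hx).2) _ hh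
      simpa [mul_assoc] using h2
  have memES : ∀ x : Γ, x ∈ ({π A, π B, π C} : Set Γ) →
      x = π A ∨ x = π B ∨ x = π C := by
    intro x hx
    simpa using hx
  have hEnorm : π E ∈ Subgroup.normalizer (Q₂ : Set Γ) := by
    apply normgen
    intro x hx
    rcases memES x hx with rfl | rfl | rfl
    · constructor
      · have h1 : π E * π A * (π E)⁻¹ = π C * (π B * (π B * π A)) := by
          rw [mul_inv_eq_iff_eq_mul]
          have h0 := congrArg π hEA
          simp only [_root_.map_mul] at h0
          rw [h0]; group
        rw [h1]
        exact mul_mem hCQ (mul_mem hBQ (mul_mem hBQ hAQ))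
      · have h1 : (π E)⁻¹ * π A * π E = π A * (π A * (π C * (π C * (π A * π A)))) := by
          have h0 := congrArg π hAE
          simp only [_root_.map_mul] at h0
          rw [mul_assoc, h0]
          group
        rw [h1]
        exact mul_mem hAQ (mul_mem hAQ (mul_mem hCQ (mul_mem hCQ (mul_mem hAQ hAQ))))
    · have h0 := congrArg π hEB
      simp only [_root_.map_mul] at h0
      have := conj_of_comm (π E) (π B) h0
      rw [this.1, this.2]
      exact ⟨hBQ, hBQ⟩
    · have h0 := congrArg π hEC
      simp only [_root_.map_mul] at h0
      have := conj_of_comm (π E) (π C) h0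
      rw [this.1, this.2]
      exact ⟨hCQ, hCQ⟩
  have hFnorm : π Fm ∈ Subgroup.normalizer (Q₂ : Set Γ) := by
    apply normgen
    intro x hx
    have key : ∀ Y w : ↥(SU3 F), (Fm * Y) * Fm = w → π Y ∈ Q₂ → π w ∈ Q₂ →
        (π Fm * π Y * (π Fm)⁻¹ ∈ Q₂ ∧ (π Fm)⁻¹ * π Y * π Fm ∈ Q₂) := by
      intro Y w hYw hY hw
      have h0 := congrArg π hYw
      simp only [_root_.map_mul] at h0
      have h1 : π Fm * π Y * (π Fm)⁻¹ = π w := by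
        rw [hπFminv, ← h0]
      have h2 : (π Fm)⁻¹ * π Y * π Fm = π Fm * π Y * (π Fm)⁻¹ := by
        rw [hπFminv]
      rw [h1, h2, h1]
      exact ⟨hw, hw⟩
    rcases memES x hx with rfl | rfl | rfl
    · exact key A (A*A) hFA hAQ (by rw [_root_.map_mul]; exact mul_mem hAQ hAQ)
    · exact key B (B*B) hFB hBQ (by rw [_root_.map_mul]; exact mul_mem hBQ hBQ)
    · exact key C C (by rw [hFC, mul_assoc, hFm2, mul_one]) hCQ hCQ
  have htnorm : t ∈ Subgroup.normalizer (Q₂ : Set Γ) := by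
    apply normgen
    intro x hx
    rcases memES x hx with rfl | rfl | rfl
    · rw [show t⁻¹ * π A * t = t * π A * t⁻¹ by rw [tinv], tA]
      exact ⟨inv_mem hAQ, inv_mem hAQ⟩
    · have h1 : t * π B * t⁻¹ = π B := by
        rw [tB.eq]; group
      rw [show t⁻¹ * π B * t = t * π B * t⁻¹ by rw [tinv], h1]
      exact ⟨hBQ, hBQ⟩
    · rw [show t⁻¹ * π C * t = t * π C * t⁻¹ by rw [tinv], tC]
      exact ⟨inv_mem hCQ, inv_mem hCQ⟩
  have hQnorm : ∀ g ∈ Q₂, g ∈ Subgroup.normalizer (Q₂ : Set Γ) := fun g hg => Subgroup.le_normalizer hg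
  have hHnorm : Subgroup.closure {π A, π B, π C, π E, π Fm, t} ≤ Subgroup.normalizer (Q₂ : Set Γ) := by
    rw [Subgroup.closure_le]
    intro x hx
    simp only [Set.mem_insert_iff, Set.mem_singleton_iff] at hx
    rcases hx with rfl | rfl | rfl | rfl | rfl | rfl
    · exact hQnorm _ hAQ
    · exact hQnorm _ hBQ
    · exact hQnorm _ hCQ
    · exact hEnorm
    · exact hFnorm
    · exact htnorm
  have part4 : ∀ g ∈ Subgroup.closure {π A, π B, π C, π E, π Fm, t},
      ∀ q ∈ Q₂, g * q * g⁻¹ ∈ Q₂ := by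
    intro g hg q hq
    exact (Subgroup.mem_normalizer_iff.mp (hHnorm hg) q).mp hq
  
  ---------------------------------------------------------------- W' subgroup
  let W' : Subgroup ↥(SU3 F) :=
    { carrier := {M | Wpred β M}
      one_mem' := Wpred_one
      mul_mem' := fun hx hy => Wpred_mul hx hy
      inv_mem' := fun hx => Wpred_inv hβ9 hx }
  have hWmem : ∀ M : ↥(SU3 F), M ∈ W' ↔ Wpred β M := fun M => Iff.rfl
  have hQW : Q₂ ≤ Subgroup.map π W' := by
    rw [hQdef, Subgroup.closure_le]
    intro x hx
    rcases memES x hx with rfl | rfl | rfl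
    · exact Subgroup.mem_map.mpr ⟨A, ⟨0,0,0, by norm_num, by norm_num,
        Or.inr (Or.inl (by rw [hAm, dm000, one_mul]))⟩, rfl⟩
    · exact Subgroup.mem_map.mpr ⟨B, ⟨0,3,6, by norm_num, by norm_num, Or.inl hBm⟩, rfl⟩
    · exact Subgroup.mem_map.mpr ⟨C, ⟨1,4,4, by norm_num, by norm_num, Or.inl hCm⟩, rfl⟩
  ---------------------------------------------------------------- π E ∉ Q₂
  have hEnotQ : π E ∉ Q₂ := by
    intro hmem
    obtain ⟨M, hMW, hMeq⟩ := Subgroup.mem_map.mp (hQW hmem)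
    have hZker : E⁻¹ * M ∈ π.ker := by
      rw [MonoidHom.mem_ker, _root_.map_mul, _root_.map_inv, hMeq, inv_mul_cancel]
    rw [hker] at hZker
    obtain ⟨l, hl⟩ := center_scalar β β⁻¹ hβ1 hβi1 hββi E A (E⁻¹ * M) hE hA hZker
    have hMdec : mat M = mat E * !![l,0,0; 0,l,0; 0,0,l] := by
      have h0 : M = E * (E⁻¹ * M) := by group
      conv_lhs => rw [h0]
      rw [mat_mul, hl]
    obtain ⟨a, b, c, m1, m2, hm | hm | hm⟩ := (hWmem M).mp hMW
    · have heq : dm β a b c = mat E * !![l,0,0; 0,l,0; 0,0,l] := by rw [← hm, hMdec]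
      rw [← Matrix.ext_iff] at heq
      have e00 := heq 0 0
      have e11 := heq 1 1
      have h0 : mat E = !![1,0,0; 0,β,0; 0,0,β⁻¹] := hE
      simp [dm, h0, Matrix.mul_fin_three] at e00 e11
      have k2 : β ^ b = β ^ (a+1) := by linear_combination e11 - β * e00
      have := (hβinj _ _).mp k2
      omega
    · have heq : dm β a b c * Am = mat E * !![l,0,0; 0,l,0; 0,0,l] := by rw [← hm, hMdec]
      rw [← Matrix.ext_iff] at heq
      have e10 := heq 1 0
      have h0 : mat E = !![1,0,0; 0,β,0; 0,0,β⁻¹] := hE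
      simp [dm, Am, h0, Matrix.mul_fin_three] at e10
      exact hβ0 e10.1
    · have heq : dm β a b c * (Am * Am) = mat E * !![l,0,0; 0,l,0; 0,0,l] := by
        rw [← hm, hMdec]
      rw [← Matrix.ext_iff] at heq
      have e01 := heq 0 1
      have h0 : mat E = !![1,0,0; 0,β,0; 0,0,β⁻¹] := hE
      simp [dm, Am, h0, Matrix.mul_fin_three] at e01
      exact hβ0 e01.1
  ---------------------------------------------------------------- t ∉ Q₂
  have htnotQ : t ∉ Q₂ := by
    intro hmem
    obtain ⟨M, hMW, hMeq⟩ := Subgroup.mem_map.mp (hQW hmem)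
    have hπFM : π (Fm * M) = s ^ 3 := by
      rw [_root_.map_mul, hMeq, htdef, ← mul_assoc, ← _root_.map_mul, hFm2,
        _root_.map_one, one_mul]
    have hw : π ((Fm * M) * C) = π ((((C*C)*(C*C))*((C*C)*(C*C))) * (Fm * M)) := by
      have h0 : π (Fm*M) * π C * (π (Fm*M))⁻¹ = π (((C*C)*(C*C))*((C*C)*(C*C))) := by
        rw [hπFM]; exact s3C
      rw [_root_.map_mul π (Fm * M) C, _root_.map_mul π _ (Fm * M),
        mul_inv_eq_iff_eq_mul.mp h0]
    have hZker : ((((C*C)*(C*C))*((C*C)*(C*C))) * (Fm*M))⁻¹ * ((Fm*M) * C) ∈ π.ker := by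
      rw [MonoidHom.mem_ker, _root_.map_mul, _root_.map_inv, hw, inv_mul_cancel]
    rw [hker] at hZker
    obtain ⟨l, hl⟩ := center_scalar β β⁻¹ hβ1 hβi1 hββi E A _ hE hA hZker
    have h0 : (Fm*M) * C = ((((C*C)*(C*C))*((C*C)*(C*C))) * (Fm*M)) *
        (((((C*C)*(C*C))*((C*C)*(C*C))) * (Fm*M))⁻¹ * ((Fm*M) * C)) := by group
    have h1 := congrArg mat h0
    rw [mat_mul ((((C*C)*(C*C))*((C*C)*(C*C))) * (Fm*M)) _, hl,
      mat_mul (((C*C)*(C*C))*((C*C)*(C*C))) (Fm*M), hc8,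
      mat_mul (Fm*M) C, mat_mul Fm M, hCm, hFmm'] at h1
    -- h1 : Fmm * mat M * dm β 1 4 4 = dm β 8 32 32 * (Fmm * mat M) * L
    have hswap : dm β 8 32 32 * Fmm = Fmm * dm β 8 32 32 := by
      simp [dm, Fmm, Matrix.mul_fin_three]
    have hFmm2 : Fmm * Fmm = (1 : Matrix (Fin 3) (Fin 3) F) := by
      simp [Fmm, Matrix.mul_fin_three, Matrix.one_fin_three]
    have h2 : mat M * dm β 1 4 4 =
        dm β 8 32 32 * (mat M * !![l,0,0; 0,l,0; 0,0,l]) := by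
      have h1' : Fmm * (mat M * dm β 1 4 4) =
          Fmm * (dm β 8 32 32 * (mat M * !![l,0,0; 0,l,0; 0,0,l])) := by
        calc Fmm * (mat M * dm β 1 4 4) = Fmm * mat M * dm β 1 4 4 := by rw [mul_assoc]
          _ = dm β 8 32 32 * (Fmm * mat M) * !![l,0,0; 0,l,0; 0,0,l] := h1
          _ = (dm β 8 32 32 * Fmm) * mat M * !![l,0,0; 0,l,0; 0,0,l] := by
              rw [mul_assoc (dm β 8 32 32) Fmm]
          _ = (Fmm * dm β 8 32 32) * mat M * !![l,0,0; 0,l,0; 0,0,l] := by rw [hswap]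
          _ = Fmm * (dm β 8 32 32 * (mat M * !![l,0,0; 0,l,0; 0,0,l])) := by
              simp only [mul_assoc]
      calc mat M * dm β 1 4 4 = 1 * (mat M * dm β 1 4 4) := (one_mul _).symm
        _ = Fmm * (Fmm * (mat M * dm β 1 4 4)) := by rw [← mul_assoc Fmm Fmm, hFmm2]
        _ = Fmm * (Fmm * (dm β 8 32 32 * (mat M * !![l,0,0; 0,l,0; 0,0,l]))) := by rw [h1']
        _ = dm β 8 32 32 * (mat M * !![l,0,0; 0,l,0; 0,0,l]) := by
            rw [← mul_assoc Fmm Fmm, hFmm2, one_mul]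
    obtain ⟨a, b, c, m1, m2, hm | hm | hm⟩ := (hWmem M).mp hMW
    · rw [hm] at h2
      rw [← Matrix.ext_iff] at h2
      have e0 := h2 0 0
      have e1 := h2 1 1
      simp [dm, Matrix.mul_fin_three] at e0 e1
      have k2 : β ^ (a+1+(32+b)) = β ^ (b+4+(8+a)) := by
        linear_combination (β^(32+b)) * e0 - (β^(8+a)) * e1
      have := (hβinj _ _).mp k2
      omega
    · rw [hm] at h2
      rw [← Matrix.ext_iff] at h2
      have e0 := h2 0 2
      have e1 := h2 2 1
      simp [dm, Am, Matrix.mul_apply, Fin.sum_univ_three] at e0 e1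
      have k2 : β ^ (a+4+(32+c)) = β ^ (c+4+(8+a)) := by
        linear_combination (β^(32+c)) * e0 - (β^(8+a)) * e1
      have := (hβinj _ _).mp k2
      omega
    · rw [hm] at h2
      rw [← Matrix.ext_iff] at h2
      have e0 := h2 0 1
      have e1 := h2 1 2
      simp [dm, Am, Matrix.mul_apply, Fin.sum_univ_three] at e0 e1
      have k2 : β ^ (a+4+(32+b)) = β ^ (b+4+(8+a)) := by
        linear_combination (β^(32+b)) * e0 - (β^(8+a)) * e1
      have := (hβinj _ _).mp k2
      omega
  ---------------------------------------------------------------- quotient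
  set NN : Subgroup Γ := Subgroup.closure {π E, π Fm, t} ⊔ Q₂ with hNNdef
  have hQleN : Q₂ ≤ NN := le_sup_right
  have hEinN : π E ∈ NN := Subgroup.mem_sup_left (Subgroup.subset_closure (by simp))
  have hFinN : π Fm ∈ NN := Subgroup.mem_sup_left (Subgroup.subset_closure (by simp))
  have htinN : t ∈ NN := Subgroup.mem_sup_left (Subgroup.subset_closure (by simp))
  have hNleH : NN ≤ Subgroup.closure {π A, π B, π C, π E, π Fm, t} := by
    rw [hNNdef]
    apply sup_le
    · rw [Subgroup.closure_le]
      intro x hx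
      rcases (by simpa using hx : x = π E ∨ x = π Fm ∨ x = t) with rfl | rfl | rfl <;>
        exact Subgroup.subset_closure (by simp)
    · rw [hQdef, Subgroup.closure_le]
      intro x hx
      rcases memES x hx with rfl | rfl | rfl <;> exact Subgroup.subset_closure (by simp)
  haveI hKnorm : (Q₂.subgroupOf NN).Normal := by
    constructor
    rintro ⟨x, hxN⟩ hxK ⟨g, hgN⟩
    rw [Subgroup.mem_subgroupOf] at hxK ⊢
    exact part4 g (hNleH hgN) x hxK
  set mkk := QuotientGroup.mk' (Q₂.subgroupOf NN) with hmkk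
  have hmk1 : ∀ y : ↥NN, mkk y = 1 ↔ y ∈ Q₂.subgroupOf NN := fun y => by
    rw [← MonoidHom.mem_ker, QuotientGroup.ker_mk']
  set xE : ↥NN := ⟨π E, hEinN⟩ with hxE
  set xF : ↥NN := ⟨π Fm, hFinN⟩ with hxF
  set xt : ↥NN := ⟨t, htinN⟩ with hxt
  have re3 : mkk xE ^ 3 = 1 := by
    rw [← _root_.map_pow, hmk1, Subgroup.mem_subgroupOf]
    show (π E) ^ 3 ∈ Q₂
    have hE3π : (π E) ^ 3 = π B := by
      rw [pow_succ, pow_two, ← _root_.map_mul, ← _root_.map_mul]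
      exact congrArg π hE3
    rw [hE3π]
    exact hBQ
  have rf2 : mkk xF ^ 2 = 1 := by
    rw [← _root_.map_pow, hmk1, Subgroup.mem_subgroupOf]
    show (π Fm) ^ 2 ∈ Q₂
    rw [pow_two, ← _root_.map_mul, hFm2, _root_.map_one]
    exact one_mem _
  have rτ2 : mkk xt ^ 2 = 1 := by
    rw [← _root_.map_pow, hmk1, Subgroup.mem_subgroupOf]
    show t ^ 2 ∈ Q₂
    rw [ht2]
    exact one_mem _
  have rfe : mkk xF * mkk xE * mkk xF = mkk xE * mkk xE := by
    rw [← _root_.map_mul, ← _root_.map_mul, ← _root_.map_mul]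
    rw [QuotientGroup.mk'_eq_mk']
    refine ⟨⟨π B, hQleN hBQ⟩, by rw [Subgroup.mem_subgroupOf]; exact hBQ, ?_⟩
    apply Subtype.ext
    show (π Fm * π E * π Fm) * π B = π E * π E
    have := congrArg π hFEFB
    simpa only [_root_.map_mul] using this
  have rτe : mkk xt * mkk xE = mkk xE * mkk xt := by
    rw [← _root_.map_mul, ← _root_.map_mul]
    congr 1
    exact Subtype.ext tE.eq
  have rτf : mkk xt * mkk xF = mkk xF * mkk xt := by
    rw [← _root_.map_mul, ← _root_.map_mul]
    congr 1
    exact Subtype.ext tFm.eq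
  have hNNclosure : Subgroup.closure ({π E, π Fm, t} ∪ {π A, π B, π C}) = NN := by
    rw [Subgroup.closure_union, hNNdef, hQdef]
  have main : ∀ g (hg : g ∈ Subgroup.closure ({π E, π Fm, t} ∪ {π A, π B, π C})),
      ∀ hgN : g ∈ NN,
      mkk ⟨g, hgN⟩ ∈ Subgroup.closure {mkk xE, mkk xF, mkk xt} := by
    intro g hg
    induction hg using Subgroup.closure_induction with
    | mem x hx =>
      intro hgN
      rcases hx with hx | hx
      · rcases (by simpa using hx : x = π E ∨ x = π Fm ∨ x = t) with rfl | rfl | rfl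
        · exact Subgroup.subset_closure (by left; rfl)
        · exact Subgroup.subset_closure (by right; left; rfl)
        · exact Subgroup.subset_closure (by right; right; rfl)
      · have hxQ : x ∈ Q₂ := by
          rw [hQdef]
          exact Subgroup.subset_closure hx
        have h1 : mkk ⟨x, hgN⟩ = 1 := by
          rw [hmk1, Subgroup.mem_subgroupOf]
          exact hxQ
        rw [h1]
        exact one_mem _
    | one =>
      intro hgN
      rw [show (⟨1, hgN⟩ : ↥NN) = 1 from rfl, _root_.map_one]
      exact one_mem _
    | mul x y hx hy ihx ihy =>
      intro hgN
      have hxN : x ∈ NN := hNNclosure ▸ hx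
      have hyN : y ∈ NN := hNNclosure ▸ hy
      rw [show (⟨x*y, hgN⟩ : ↥NN) = ⟨x, hxN⟩ * ⟨y, hyN⟩ from rfl, _root_.map_mul]
      exact mul_mem (ihx hxN) (ihy hyN)
    | inv x hx ihx =>
      intro hgN
      have hxN : x ∈ NN := hNNclosure ▸ hx
      rw [show (⟨x⁻¹, hgN⟩ : ↥NN) = (⟨x, hxN⟩ : ↥NN)⁻¹ from rfl, _root_.map_inv]
      exact inv_mem (ihx hxN)
  have hgenQN : Subgroup.closure ({mkk xE, mkk xF, mkk xt} :
      Set (↥NN ⧸ Q₂.subgroupOf NN)) = ⊤ := by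
    rw [eq_top_iff]
    rintro y -
    refine QuotientGroup.induction_on y ?_
    rintro ⟨g, hgN⟩
    exact main g (hNNclosure ▸ hgN) hgN
  have hne : mkk xE ≠ 1 := by
    intro h
    have := Subgroup.mem_subgroupOf.mp ((hmk1 xE).mp h)
    exact hEnotQ this
  have hnτ : mkk xt ≠ 1 := by
    intro h
    have := Subgroup.mem_subgroupOf.mp ((hmk1 xt).mp h)
    exact htnotQ this
  obtain ⟨ψ, hbij⟩ := Stmt18Aux.exists_bij (mkk xE) (mkk xF) (mkk xt)
    re3 rf2 rτ2 rfe rτe rτf hgenQN hne hnτ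
  set ψiso : Stmt18Aux.G12 ≃* (↥NN ⧸ Q₂.subgroupOf NN) := MulEquiv.ofBijective ψ hbij
    with hψiso
  refine ⟨⟨ht2, ?_⟩, ⟨tA, tC⟩, ⟨tB, tE, tFm⟩, part4,
    ψiso.symm.toMonoidHom.comp mkk, ?_, ?_⟩
  · intro h
    exact htnotQ (h ▸ one_mem Q₂)
  · intro z
    obtain ⟨x, hx⟩ := QuotientGroup.mk'_surjective (Q₂.subgroupOf NN) (ψiso z)
    refine ⟨x, ?_⟩
    show ψiso.symm (mkk x) = z
    rw [hx]
    exact ψiso.symm_apply_apply z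
  · ext x
    rw [MonoidHom.mem_ker, MonoidHom.comp_apply]
    have : ψiso.symm.toMonoidHom (mkk x) = ψiso.symm (mkk x) := rfl
    rw [this, EmbeddingLike.map_eq_one_iff, ← MonoidHom.mem_ker, QuotientGroup.ker_mk']
end
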